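/- arXiv:2204.09113 — 9 statements merged into one kernel-verified Lean document; each statement's English description precedes it below -/
import Mathlib

section
/- If a graph G admits a weak r-guidance system of maximum outdegree c and G is t-degenerate, then G admits an r-guidance system of maximum outdegree at most c + t. -/
open SimpleGraph

variable {V : Type*}

/-- `H` is a partial orientation of `G`: every directed edge of `H` projects to an edge of `G`. -/
def IsPartialOrientation (G : SimpleGraph V) (H : V → V → Prop) : Prop :=
  ∀ ⦃u v⦄, H u v → G.Adj u v

/-- `oball H v a` is the set of vertices reachable from `v` in `H` by a directed path
of length at most `a`. -/
def oball (H : V → V → Prop) (v : V) : ℕ → Set V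
  | 0 => {v}
  | a + 1 => oball H v a ∪ {w | ∃ x ∈ oball H v a, H x w}

/-- `gate G u v` is the set of neighbors of `u` at distance `dist u v - 1` from `v`,
i.e. the possible second vertices of shortest `u`-`v` paths. -/
def gate (G : SimpleGraph V) (u v : V) : Set V :=
  {y | G.Adj u y ∧ G.dist y v = G.dist u v - 1}

/-- `H` is a weak `r`-guidance system of `G`: for distinct `u,v` at distance `ℓ ≤ r`
there are `a + b = ℓ - 1` and an edge of `G` between `oball H u a` and `oball H v b`. -/
def IsWeakGuidance (G : SimpleGraph V) (H : V → V → Prop) (r : ℕ) : Prop :=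
  ∀ u v : V, u ≠ v → G.Reachable u v → G.dist u v ≤ r →
    ∃ a b : ℕ, a + b = G.dist u v - 1 ∧ ∃ x ∈ oball H u a, ∃ y ∈ oball H v b, G.Adj x y

/-- Gate formulation of weak `r`-guidance systems: for `u,v` at distance `ℓ` with
`2 ≤ ℓ ≤ r`, `u` has an outneighbor in `gate G u v` or `v` has one in `gate G v u`. -/
def IsWeakGuidanceGate (G : SimpleGraph V) (H : V → V → Prop) (r : ℕ) : Prop :=
  ∀ u v : V, 2 ≤ G.dist u v → G.dist u v ≤ r →
    (∃ y ∈ gate G u v, H u y) ∨ (∃ y ∈ gate G v u, H v y)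

/-- The outdegree of `u` in the partial orientation `H`. -/
noncomputable def outdeg (H : V → V → Prop) (u : V) : ℕ := {v | H u v}.ncard

/-- `H` is an `r`-guidance system of `G`: an orientation (every edge of `G` directed in at
least one way) such that any `u,v` at distance `ℓ ≤ r` satisfy
`oball H u a ∩ oball H v b ≠ ∅` for some `a + b = ℓ`. -/
def IsGuidance (G : SimpleGraph V) (H : V → V → Prop) (r : ℕ) : Prop :=
  (∀ u v : V, G.Adj u v → H u v ∨ H v u) ∧
  ∀ u v : V, G.Reachable u v → G.dist u v ≤ r →
    ∃ a b : ℕ, a + b = G.dist u v ∧ (oball H u a ∩ oball H v b).Nonempty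

/-- `G` is `t`-degenerate: every nonempty vertex subset contains a vertex with at most `t`
neighbors inside the subset. -/
def IsDegenerate (G : SimpleGraph V) (t : ℕ) : Prop :=
  ∀ A : Set V, A.Nonempty → ∃ v ∈ A, (A ∩ {w | G.Adj v w}).ncard ≤ t


lemma oball_mono {H H' : V → V → Prop} (h : ∀ u v, H u v → H' u v) (v : V) :
    ∀ a, oball H v a ⊆ oball H' v a := by
  intro a
  induction a with
  | zero => exact le_refl _
  | succ a ih =>
    rintro w (hw | ⟨x, hx, hxw⟩)
    · exact Or.inl (ih hw)
    · exact Or.inr ⟨x, ih hx, h _ _ hxw⟩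

lemma exists_orientation {V : Type*} (G : SimpleGraph V) (t : ℕ)
    (hdeg : IsDegenerate G t) (A : Finset V) :
    ∃ D : V → V → Prop,
      (∀ u v, D u v → u ∈ A ∧ v ∈ A ∧ G.Adj u v) ∧
      (∀ u v, u ∈ A → v ∈ A → G.Adj u v → D u v ∨ D v u) ∧
      (∀ u, outdeg D u ≤ t) := by
  classical
  induction A using Finset.strongInductionOn with
  | _ A ih =>
  rcases A.eq_empty_or_nonempty with rfl | hA
  · refine ⟨fun _ _ => False, by simp, by simp, fun u => ?_⟩
    simp [outdeg]
  · obtain ⟨v, hvA, hv⟩ := hdeg (↑A : Set V) (by exact_mod_cast hA)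
    obtain ⟨D', hD'1, hD'2, hD'3⟩ := ih (A.erase v) (Finset.erase_ssubset hvA)
    refine ⟨fun u w => D' u w ∨ (u = v ∧ w ∈ A ∧ G.Adj v w), ?_, ?_, ?_⟩
    · rintro u w (h | ⟨rfl, hw, ha⟩)
      · obtain ⟨h1, h2, h3⟩ := hD'1 u w h
        exact ⟨Finset.mem_of_mem_erase h1, Finset.mem_of_mem_erase h2, h3⟩
      · exact ⟨hvA, hw, ha⟩
    · intro u w hu hw ha
      by_cases huv : u = v
      · exact Or.inl (Or.inr ⟨huv, hw, huv ▸ ha⟩)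
      · by_cases hwv : w = v
        · exact Or.inr (Or.inr ⟨hwv, hu, hwv ▸ ha.symm⟩)
        · rcases hD'2 u w (Finset.mem_erase.2 ⟨huv, hu⟩) (Finset.mem_erase.2 ⟨hwv, hw⟩) ha with
            h | h
          · exact Or.inl (Or.inl h)
          · exact Or.inr (Or.inl h)
    · intro u
      by_cases huv : u = v
      · subst huv
        have hset : {w | D' u w ∨ (u = u ∧ w ∈ A ∧ G.Adj u w)} =
            (↑A : Set V) ∩ {w | G.Adj u w} := by
          ext w
          constructor
          · rintro (h | ⟨-, hw, ha⟩)
            · exact absurd rfl (Finset.mem_erase.1 (hD'1 u w h).1).1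
            · exact ⟨hw, ha⟩
          · rintro ⟨hw, ha⟩
            exact Or.inr ⟨rfl, hw, ha⟩
        unfold outdeg
        exact le_trans (le_of_eq (congrArg Set.ncard hset)) hv
      · have hset : {w | D' u w ∨ (u = v ∧ w ∈ A ∧ G.Adj v w)} = {w | D' u w} := by
          ext w; simp [huv]
        unfold outdeg
        exact le_trans (le_of_eq (congrArg Set.ncard hset)) (hD'3 u)

/-- If a graph `G` admits a weak `r`-guidance system of maximum outdegree `c` and `G` is
`t`-degenerate, then `G` admits an `r`-guidance system of maximum outdegree at most `c + t`. -/
theorem weakGuidance_degenerate_guidance {V : Type*} [Fintype V] (G : SimpleGraph V)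
    (r c t : ℕ) (H : V → V → Prop)
    (hpo : IsPartialOrientation G H) (hw : IsWeakGuidance G H r)
    (hout : ∀ u, outdeg H u ≤ c) (hdeg : IsDegenerate G t) :
    ∃ H' : V → V → Prop, IsPartialOrientation G H' ∧ IsGuidance G H' r ∧
      ∀ u, outdeg H' u ≤ c + t := by
  classical
  obtain ⟨D, hD1, hD2, hD3⟩ := exists_orientation G t hdeg Finset.univ
  refine ⟨fun u v => H u v ∨ D u v, ?_, ⟨?_, ?_⟩, ?_⟩
  · rintro u v (h | h)
    · exact hpo h
    · exact (hD1 u v h).2.2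
  · intro u v ha
    rcases hD2 u v (Finset.mem_univ u) (Finset.mem_univ v) ha with h | h
    · exact Or.inl (Or.inr h)
    · exact Or.inr (Or.inr h)
  · intro u v hreach hdist
    by_cases huv : u = v
    · subst huv
      exact ⟨0, 0, by simp [SimpleGraph.dist_self], u, rfl, rfl⟩
    · have hpos : 0 < G.dist u v := hreach.pos_dist_of_ne huv
      obtain ⟨a, b, hab, x, hx, y, hy, hxy⟩ := hw u v huv hreach hdist
      have hx' : x ∈ oball (fun u v => H u v ∨ D u v) u a :=
        oball_mono (fun _ _ h => Or.inl h) u a hx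
      have hy' : y ∈ oball (fun u v => H u v ∨ D u v) v b :=
        oball_mono (fun _ _ h => Or.inl h) v b hy
      rcases hD2 x y (Finset.mem_univ x) (Finset.mem_univ y) hxy with h | h
      · exact ⟨a + 1, b, by omega, y, Or.inr ⟨x, hx', Or.inr h⟩, hy'⟩
      · exact ⟨a, b + 1, by omega, x, hx', Or.inr ⟨y, hy', Or.inr h⟩⟩
  · intro u
    have hset : {v | H u v ∨ D u v} = {v | H u v} ∪ {v | D u v} := Set.setOf_or
    calc outdeg (fun u v => H u v ∨ D u v) u
        = ({v | H u v} ∪ {v | D u v}).ncard := by rw [outdeg, hset]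
      _ ≤ {v | H u v}.ncard + {v | D u v}.ncard := Set.ncard_union_le _ _
      _ ≤ c + t := Nat.add_le_add (hout u) (hD3 u)
end

section
/- A partial orientation H of a graph G is a weak r-guidance system if and only if for all vertices u,v at distance ℓ in G with 2 ≤ ℓ ≤ r, either u has an outneighbor in gate_G(u,v) or v has an outneighbor in gate_G(v,u), where gate_G(u,v) denotes the set of neighbors of u at distance ℓ-1 from v. -/
open SimpleGraph

variable {V : Type*}

section Aux
variable {G : SimpleGraph V} {H : V → V → Prop}

lemma mem_oball_self (H : V → V → Prop) (v : V) (n : ℕ) : v ∈ oball H v n := by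
  induction n with
  | zero => exact rfl
  | succ n ih => exact Or.inl ih

lemma oball_subset_succ (H : V → V → Prop) (v : V) (n : ℕ) :
    oball H v n ⊆ oball H v (n + 1) := fun x hx => Or.inl hx

lemma oball_step {u y : V} (h : H u y) (a : ℕ) :
    oball H y a ⊆ oball H u (a + 1) := by
  induction a with
  | zero => rintro x rfl; exact Or.inr ⟨u, rfl, h⟩
  | succ a ih =>
    rintro x (hx | ⟨z, hz, hzx⟩)
    · exact Or.inl (ih hx)
    · exact Or.inr ⟨z, ih hz, hzx⟩

lemma oball_first_step {u x : V} {n : ℕ}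
    (hx : x ∈ oball H u (n + 1)) (hne : x ≠ u) :
    ∃ w, H u w ∧ x ∈ oball H w n := by
  induction n generalizing x with
  | zero =>
    rcases hx with hx | ⟨z, hz, hzx⟩
    · exact absurd hx hne
    · cases hz; exact ⟨x, hzx, rfl⟩
  | succ n ih =>
    rcases hx with hx | ⟨z, hz, hzx⟩
    · obtain ⟨w, hw, hxw⟩ := ih hx hne
      exact ⟨w, hw, oball_subset_succ _ _ _ hxw⟩
    · by_cases hzu : z = u
      · subst hzu; exact ⟨x, hzx, mem_oball_self _ _ _⟩
      · obtain ⟨w, hw, hzw⟩ := ih hz hzu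
        exact ⟨w, hw, Or.inr ⟨z, hzw, hzx⟩⟩

lemma oball_walk (hpo : IsPartialOrientation G H) {u x : V} {n : ℕ}
    (hx : x ∈ oball H u n) : ∃ p : G.Walk u x, p.length ≤ n := by
  induction n generalizing x with
  | zero => cases hx; exact ⟨SimpleGraph.Walk.nil, le_refl _⟩
  | succ n ih =>
    rcases hx with hx | ⟨z, hz, hzx⟩
    · obtain ⟨p, hp⟩ := ih hx
      exact ⟨p, hp.trans (Nat.le_succ n)⟩
    · obtain ⟨p, hp⟩ := ih hz
      exact ⟨p.concat (hpo hzx), by simpa [SimpleGraph.Walk.length_concat] using hp⟩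

end Aux

/-- A partial orientation `H` of `G` is a weak `r`-guidance system if and only if for all
`u, v` at distance `ℓ` with `2 ≤ ℓ ≤ r`, either `u` has an outneighbor in `gate G u v` or
`v` has an outneighbor in `gate G v u`. -/
theorem isWeakGuidance_iff_gate {V : Type*} (G : SimpleGraph V) (H : V → V → Prop) (r : ℕ)
    (hpo : IsPartialOrientation G H) :
    IsWeakGuidance G H r ↔ IsWeakGuidanceGate G H r := by
  constructor
  · intro hwg u v h2 hr
    have hne : u ≠ v ∧ G.Reachable u v := by
      rw [← SimpleGraph.dist_ne_zero_iff_ne_and_reachable]; omega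
    obtain ⟨a, b, hab, x, hx, y, hy, hadj⟩ := hwg u v hne.1 hne.2 hr
    obtain ⟨q, hq⟩ := oball_walk hpo hy
    rcases Nat.eq_zero_or_pos a with ha | ha
    · subst ha
      cases hx
      have hyv : y ≠ v := by
        rintro rfl
        have := dist_eq_one_iff_adj (G := G).mpr hadj
        omega
      obtain ⟨b', rfl⟩ : ∃ b', b = b' + 1 := by
        cases b with
        | zero => exact absurd hy hyv
        | succ b' => exact ⟨b', rfl⟩
      obtain ⟨w, hw, hyw⟩ := oball_first_step hy hyv
      obtain ⟨q', hq'⟩ := oball_walk hpo hyw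
      have hupper : G.dist w u ≤ b' + 1 := by
        have := G.dist_le (q'.concat hadj.symm)
        simp only [SimpleGraph.Walk.length_concat] at this
        omega
      obtain ⟨p0, hp0⟩ := (q'.concat hadj.symm).reachable.exists_walk_length_eq_dist
      have hlower : G.dist v u ≤ G.dist w u + 1 := by
        have := G.dist_le (SimpleGraph.Walk.cons (hpo hw) p0)
        simp only [SimpleGraph.Walk.length_cons, hp0] at this
        omega
      have hcomm : G.dist v u = G.dist u v := dist_comm (G := G)
      exact Or.inr ⟨w, ⟨hpo hw, by omega⟩, hw⟩
    · have hxu : x ≠ u := by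
        rintro rfl
        have := G.dist_le (SimpleGraph.Walk.cons hadj q.reverse)
        simp only [SimpleGraph.Walk.length_cons, SimpleGraph.Walk.length_reverse] at this
        omega
      obtain ⟨a', rfl⟩ : ∃ a', a = a' + 1 := ⟨a - 1, by omega⟩
      obtain ⟨w, hw, hxw⟩ := oball_first_step hx hxu
      obtain ⟨p', hp'⟩ := oball_walk hpo hxw
      have hupper : G.dist w v ≤ a' + 1 + b := by
        have := G.dist_le (p'.append (SimpleGraph.Walk.cons hadj q.reverse))
        simp only [SimpleGraph.Walk.length_append, SimpleGraph.Walk.length_cons,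
          SimpleGraph.Walk.length_reverse] at this
        omega
      obtain ⟨p0, hp0⟩ :=
        (p'.append (SimpleGraph.Walk.cons hadj q.reverse)).reachable.exists_walk_length_eq_dist
      have hlower : G.dist u v ≤ G.dist w v + 1 := by
        have := G.dist_le (SimpleGraph.Walk.cons (hpo hw) p0)
        simp only [SimpleGraph.Walk.length_cons, hp0] at this
        omega
      exact Or.inl ⟨w, ⟨hpo hw, by omega⟩, hw⟩
  · intro hg
    have key : ∀ ℓ u v, G.dist u v = ℓ → u ≠ v → G.Reachable u v → ℓ ≤ r →
        ∃ a b : ℕ, a + b = ℓ - 1 ∧ ∃ x ∈ oball H u a, ∃ y ∈ oball H v b, G.Adj x y := by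
      intro ℓ
      induction ℓ using Nat.strong_induction_on with
      | _ ℓ ih =>
        intro u v hd hne hre hr
        have hpos : 1 ≤ ℓ := by
          have := hre.pos_dist_of_ne hne
          omega
        rcases eq_or_lt_of_le hpos with h1 | h2
        · exact ⟨0, 0, by omega, u, rfl, v, rfl, dist_eq_one_iff_adj (G := G).mp (by omega)⟩
        · rcases hg u v (by omega) (by omega) with ⟨y, ⟨hadj, hdy⟩, hH⟩ | ⟨y, ⟨hadj, hdy⟩, hH⟩
          · rw [hd] at hdy
            have hyv : y ≠ v := by
              rintro rfl
              rw [SimpleGraph.dist_self] at hdy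
              omega
            have hre2 : G.Reachable y v := hadj.symm.reachable.trans hre
            obtain ⟨a, b, hab, x, hx, y', hy', hadj'⟩ :=
              ih (ℓ - 1) (by omega) y v hdy hyv hre2 (by omega)
            exact ⟨a + 1, b, by omega, x, oball_step hH a hx, y', hy', hadj'⟩
          · rw [show G.dist v u = G.dist u v from dist_comm, hd] at hdy
            have hyu : y ≠ u := by
              rintro rfl
              rw [SimpleGraph.dist_self] at hdy
              omega
            have hre2 : G.Reachable u y := hre.trans hadj.reachable
            obtain ⟨a, b, hab, x, hx, y', hy', hadj'⟩ :=
              ih (ℓ - 1) (by omega) u y (by rw [dist_comm (G := G) (u := u) (v := y)]; exact hdy) hyu.symm hre2 (by omega)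
            exact ⟨a, b + 1, by omega, x, hx, y', oball_step hH b hy', hadj'⟩
    intro u v hne hre hr
    exact key _ u v rfl hne hre hr
end

section
/- Let G be an interval graph. Define a partial orientation H as follows: for each vertex u, direct an edge from u to a neighbor v₁ whose interval has maximum right endpoint among neighbors of u, and an edge from u to a neighbor v₂ whose interval has minimum left endpoint among neighbors of u. Then H is a weak r-guidance system for every positive integer r, and has maximum outdegree at most two. -/
/-! Let `u, p, w` be the first three vertices of a shortest path from `u` to `v`. Since `u` and
`w` are not adjacent, the interval of `w` lies entirely to one side of that of `u`, say to the
right. The neighbour `f u` of `u` reaching furthest right reaches at least as far as `p`, which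
meets `w`; so `f u` meets `w` and is the second vertex of a shortest `u`-`v` path. Thus the
orientation is a gate system, and a gate system is a weak guidance system by induction on the
distance, following one gate edge at a time. -/

open SimpleGraph

variable {V : Type*}

lemma oball_subset_oball_succ_of_rel {H : V → V → Prop} {u y : V} (h : H u y) :
    ∀ a, oball H y a ⊆ oball H u (a + 1)
  | 0 => by
    rintro w rfl
    exact Or.inr ⟨u, rfl, h⟩
  | a + 1 => by
    rintro w (hw | ⟨x, hx, hxw⟩)
    · exact Or.inl (oball_subset_oball_succ_of_rel h a hw)
    · exact Or.inr ⟨x, oball_subset_oball_succ_of_rel h a hx, hxw⟩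

lemma outdeg_le_two {H : V → V → Prop} {u a b : V} (h : ∀ y, H u y → y = a ∨ y = b) :
    outdeg H u ≤ 2 :=
  calc outdeg H u ≤ ({a, b} : Set V).ncard :=
        Set.ncard_le_ncard h (Set.toFinite _)
    _ ≤ 2 := (Set.ncard_insert_le _ _).trans (by simp)

namespace SimpleGraph

variable {G : SimpleGraph V}

lemma exists_adj_adj_dist_add_two {u v : V} (h : 2 ≤ G.dist u v) :
    ∃ p w, G.Adj u p ∧ G.Adj p w ∧ ¬G.Adj u w ∧ u ≠ w ∧ G.dist w v + 2 = G.dist u v := by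
  obtain ⟨q, hq⟩ := exists_walk_of_dist_ne_zero (by omega : G.dist u v ≠ 0)
  match q, hq with
  | .nil, _ => simp at h
  | .cons _ .nil, hq => simp at hq; omega
  | .cons (v := p) hup (.cons (v := w) hpw q), hq =>
    simp only [Walk.length_cons] at hq
    have hwv : G.dist w v ≤ q.length := dist_le q
    have huw : G.dist u w ≤ 2 := dist_le (.cons hup (.cons hpw .nil))
    have htri := (Walk.reachable (.cons hup (.cons hpw .nil))).dist_triangle_left v
    refine ⟨p, w, hup, hpw, fun hadj => ?_, ?_, by omega⟩
    · have := dist_le (.cons hadj q)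
      simp only [Walk.length_cons] at this
      omega
    · rintro rfl
      have := dist_le q
      omega

lemma mem_gate_of_adj_of_adj {u v y w : V} (huy : G.Adj u y) (hyw : G.Adj y w)
    (hw : G.dist w v + 2 = G.dist u v) : y ∈ gate G u v := by
  refine ⟨huy, ?_⟩
  have hyv := hyw.reachable.dist_triangle_left v
  have huv := huy.reachable.dist_triangle_left v
  rw [dist_eq_one_iff_adj.mpr hyw] at hyv
  rw [dist_eq_one_iff_adj.mpr huy] at huv
  omega

end SimpleGraph

lemma IsWeakGuidanceGate.isWeakGuidance {G : SimpleGraph V} {H : V → V → Prop} {r : ℕ}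
    (hH : IsWeakGuidanceGate G H r) : IsWeakGuidance G H r := by
  intro u v hne hr hle
  induction hd : G.dist u v generalizing u v with
  | zero => exact absurd (hr.dist_eq_zero_iff.mp hd) hne
  | succ n ih =>
    rcases Nat.eq_zero_or_pos n with rfl | hn
    · exact ⟨0, 0, rfl, u, rfl, v, rfl, dist_eq_one_iff_adj.mp hd⟩
    rcases hH u v (by omega) hle with ⟨y, ⟨-, hyv⟩, huy⟩ | ⟨y, ⟨-, hyu⟩, hvy⟩
    · have hyv' : G.dist y v ≠ 0 := by omega
      obtain ⟨a, b, hab, x, hx, x', hx', hxx'⟩ := ih y v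
        (dist_ne_zero_iff_ne_and_reachable.mp hyv').1 (.of_dist_ne_zero hyv') (by omega)
        (by omega)
      exact ⟨a + 1, b, by omega, x, oball_subset_oball_succ_of_rel huy a hx, x', hx', hxx'⟩
    · rw [dist_comm (u := y), dist_comm (u := v)] at hyu
      have huy' : G.dist u y ≠ 0 := by omega
      obtain ⟨a, b, hab, x, hx, x', hx', hxx'⟩ := ih u y
        (dist_ne_zero_iff_ne_and_reachable.mp huy').1 (.of_dist_ne_zero huy') (by omega)
        (by omega)
      exact ⟨a, b + 1, by omega, x, hx, x', oball_subset_oball_succ_of_rel hvy b hx', hxx'⟩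

section IntervalGraph

variable {G : SimpleGraph V} {le re : V → ℝ}

lemma intervalGraph_adj_iff (hint : ∀ v, le v < re v)
    (hG : ∀ u v, G.Adj u v ↔ (u ≠ v ∧ max (le u) (le v) < min (re u) (re v))) {u v : V} :
    G.Adj u v ↔ u ≠ v ∧ le u < re v ∧ le v < re u := by
  rw [hG, max_lt_iff, lt_min_iff, lt_min_iff]
  have := hint u
  have := hint v
  constructor
  · rintro ⟨hne, ⟨-, h₁⟩, h₂, -⟩
    exact ⟨hne, h₁, h₂⟩
  · rintro ⟨hne, h₁, h₂⟩
    exact ⟨hne, ⟨‹_›, h₁⟩, h₂, ‹_›⟩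

lemma intervalGraph_adj_rightmost_or_leftmost (hint : ∀ v, le v < re v)
    (hG : ∀ u v, G.Adj u v ↔ (u ≠ v ∧ max (le u) (le v) < min (re u) (re v)))
    {u p w y₁ y₂ : V} (hpw : G.Adj p w) (huw : ¬G.Adj u w) (hne : u ≠ w)
    (huy₁ : G.Adj u y₁) (hy₁ : re p ≤ re y₁) (huy₂ : G.Adj u y₂) (hy₂ : le y₂ ≤ le p) :
    G.Adj y₁ w ∨ G.Adj y₂ w := by
  simp only [intervalGraph_adj_iff hint hG] at hpw huw huy₁ huy₂ ⊢
  have := hint w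
  by_cases hright : re u ≤ le w
  · refine .inl ⟨?_, by linarith, by linarith⟩
    rintro rfl
    exact huw huy₁
  · have hleft : re w ≤ le u := by
      by_contra! h
      exact huw ⟨hne, h, by linarith⟩
    refine .inr ⟨?_, by linarith, by linarith⟩
    rintro rfl
    exact huw huy₂

end IntervalGraph

/-- Let `G` be the interval graph of open intervals `(le v, re v)`. Direct from each vertex
`u` an edge to a neighbor `f u` whose interval has maximum right endpoint among neighbors
of `u`, and an edge to a neighbor `g u` whose interval has minimum left endpoint among
neighbors of `u`. The resulting partial orientation `H` is a weak `r`-guidance system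
for every positive integer `r`, of maximum outdegree at most two. -/
theorem intervalGraph_weakGuidance {V : Type*} (le re : V → ℝ) (hint : ∀ v, le v < re v)
    (G : SimpleGraph V)
    (hG : ∀ u v, G.Adj u v ↔ (u ≠ v ∧ max (le u) (le v) < min (re u) (re v)))
    (f g : V → V)
    (hf : ∀ u, (∃ w, G.Adj u w) →
      G.Adj u (f u) ∧ ∀ z, G.Adj u z → re z ≤ re (f u))
    (hg : ∀ u, (∃ w, G.Adj u w) →
      G.Adj u (g u) ∧ ∀ z, G.Adj u z → le (g u) ≤ le z)
    (H : V → V → Prop)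
    (hH : ∀ x y, H x y ↔ ((∃ w, G.Adj x w) ∧ (y = f x ∨ y = g x))) :
    IsPartialOrientation G H ∧ (∀ r : ℕ, 1 ≤ r → IsWeakGuidance G H r) ∧
      ∀ u, outdeg H u ≤ 2 := by
  refine ⟨fun u y huy => ?_, fun r _ => IsWeakGuidanceGate.isWeakGuidance ?_,
    fun u => outdeg_le_two fun y hy => ((hH u y).mp hy).2⟩
  · obtain ⟨hu, rfl | rfl⟩ := (hH u y).mp huy
    exacts [(hf u hu).1, (hg u hu).1]
  intro u v h2 _
  obtain ⟨p, w, hup, hpw, huw, hne, hw⟩ := exists_adj_adj_dist_add_two h2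
  have hu : ∃ w, G.Adj u w := ⟨p, hup⟩
  obtain ⟨hfu, hf_max⟩ := hf u hu
  obtain ⟨hgu, hg_min⟩ := hg u hu
  refine .inl ?_
  rcases intervalGraph_adj_rightmost_or_leftmost hint hG hpw huw hne hfu (hf_max p hup) hgu
      (hg_min p hup) with hfw | hgw
  · exact ⟨f u, mem_gate_of_adj_of_adj hfu hfw hw, (hH u _).mpr ⟨hu, .inl rfl⟩⟩
  · exact ⟨g u, mem_gate_of_adj_of_adj hgu hgw hw, (hH u _).mpr ⟨hu, .inr rfl⟩⟩
end

section
/- Let p be a fractional r-guidance system in a graph G with maximum outdegree at most c, and let u,v be distinct vertices at distance ℓ ≤ r. Then the probability that a random (p,r)-exploration between u and v yields a shortest path between u and v is at least (4c)^{-(ℓ-1)}. -/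
open SimpleGraph

variable {V : Type*}

/-- Total outgoing `p`-weight of `u` in a fractional orientation `p`. -/
noncomputable def dplus [Fintype V] (p : V → V → ℝ) (u : V) : ℝ := ∑ v, p u v

open Classical in
/-- The probability that a `p`-random neighbor of `u` is `y`: proportional to `p u y` if
`u` has positive outgoing weight, uniform among neighbors otherwise. -/
noncomputable def wt [Fintype V] (G : SimpleGraph V) (p : V → V → ℝ) (u y : V) : ℝ :=
  if G.Adj u y then
    (if 0 < dplus p u then p u y / dplus p u else 1 / (G.neighborFinset u).card)
  else 0

open Classical in
/-- `succProb G p r u v` is the probability that a random `(p,r)`-exploration between `u`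
and `v` yields a shortest `u`–`v` path.  (A first step from `u` to a neighbor `y` can lead
to success only when `y ∈ gate G u v`, and then succeeds exactly when the remaining
`(p, r-1)`-exploration between `y` and `v` yields a shortest `y`–`v` path; similarly for a
first step from `v`.  Each side is chosen with probability `1/2`.) -/
noncomputable def succProb [Fintype V] (G : SimpleGraph V) (p : V → V → ℝ) :
    ℕ → V → V → ℝ
  | 0, _, _ => 0
  | r + 1, u, v =>
    if G.Adj u v then 1
    else if r = 0 ∨ (G.neighborFinset u).card = 0 ∨ (G.neighborFinset v).card = 0 then 0
    else (1 / 2) * (∑ y, if y ∈ gate G u v then wt G p u y * succProb G p r y v else 0)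
       + (1 / 2) * (∑ y, if y ∈ gate G v u then wt G p v y * succProb G p r u y else 0)


lemma gate_nonempty {G : SimpleGraph V} {u v : V} (hne : u ≠ v) (hreach : G.Reachable u v) :
    ∃ y, y ∈ gate G u v := by
  have hd0 : G.dist u v ≠ 0 := dist_ne_zero_iff_ne_and_reachable.mpr ⟨hne, hreach⟩
  obtain ⟨w, hw⟩ := exists_walk_of_dist_ne_zero hd0
  obtain ⟨y, hadj, w', rfl⟩ := Walk.exists_eq_cons_of_ne hne w
  rw [Walk.length_cons] at hw
  have h1 : G.dist y v ≤ G.dist u v - 1 := by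
    have := dist_le w'
    omega
  have h2 : G.dist u v ≤ G.dist y v + 1 := by
    obtain ⟨q, hq⟩ := (w'.reachable).exists_walk_length_eq_dist
    have := dist_le (Walk.cons hadj q)
    rw [Walk.length_cons, hq] at this
    exact this
  exact ⟨y, hadj, by omega⟩

lemma wt_nonneg' [Fintype V] (G : SimpleGraph V) (p : V → V → ℝ)
    (hnn : ∀ u v, 0 ≤ p u v) (u y : V) : 0 ≤ wt G p u y := by
  unfold wt
  split_ifs with h1 h2
  · exact div_nonneg (hnn u y) h2.le
  · positivity
  · exact le_refl 0

lemma succProb_nonneg' [Fintype V] (G : SimpleGraph V) (p : V → V → ℝ)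
    (hnn : ∀ u v, 0 ≤ p u v) (r : ℕ) : ∀ u v, 0 ≤ succProb G p r u v := by
  induction r with
  | zero => intro u v; rw [succProb]
  | succ r ih =>
    intro u v
    rw [succProb]
    split_ifs with h1 h2
    · norm_num
    · exact le_refl 0
    · apply add_nonneg <;>
        · apply mul_nonneg (by norm_num)
          apply Finset.sum_nonneg
          intro y _
          split_ifs with hy
          · exact mul_nonneg (wt_nonneg' G p hnn _ _) (ih _ _)
          · exact le_refl 0


open Classical in
/-- If `p` is a fractional `r`-guidance system of maximum outdegree at most `c` and `u,v`
are distinct vertices at distance `ℓ ≤ r`, then the probability that a random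
`(p,r)`-exploration between `u` and `v` yields a shortest path is at least `(4c)^{-(ℓ-1)}`. -/
theorem exploration_success_prob {V : Type*} [Fintype V] (G : SimpleGraph V)
    (p : V → V → ℝ) (r : ℕ) (c : ℝ)
    (hnn : ∀ u v, 0 ≤ p u v) (hsupp : ∀ u v, ¬G.Adj u v → p u v = 0)
    (hfrac : ∀ u v, 2 ≤ G.dist u v → G.dist u v ≤ r →
      1 ≤ (∑ y, if y ∈ gate G u v then p u y else 0) +
          (∑ y, if y ∈ gate G v u then p v y else 0))
    (hout : ∀ u, dplus p u ≤ c)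
    (u v : V) (huv : u ≠ v) (hreach : G.Reachable u v) (hd : G.dist u v ≤ r) :
    ((4 * c) ^ (G.dist u v - 1))⁻¹ ≤ succProb G p r u v := by
  classical
  suffices H : ∀ n : ℕ, (∀ u v, 2 ≤ G.dist u v → G.dist u v ≤ n →
      1 ≤ (∑ y, if y ∈ gate G u v then p u y else 0) +
          (∑ y, if y ∈ gate G v u then p v y else 0)) →
      ∀ u v : V, u ≠ v → G.Reachable u v → G.dist u v ≤ n →
      ((4 * c) ^ (G.dist u v - 1))⁻¹ ≤ succProb G p n u v by
    exact H r hfrac u v huv hreach hd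
  intro n
  induction n with
  | zero =>
    intro _ u v huv hreach hd
    exfalso
    have : G.dist u v ≠ 0 := dist_ne_zero_iff_ne_and_reachable.mpr ⟨huv, hreach⟩
    omega
  | succ r ih =>
    intro hfrac u v huv hreach hd
    have ih' := ih (fun a b h2 hle => hfrac a b h2 (hle.trans (Nat.le_succ r)))
    by_cases hadj : G.Adj u v
    · have h1 : G.dist u v = 1 := dist_eq_one_iff_adj.mpr hadj
      rw [succProb, if_pos hadj, h1]
      norm_num
    · have hd0 : G.dist u v ≠ 0 := dist_ne_zero_iff_ne_and_reachable.mpr ⟨huv, hreach⟩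
      have hd1 : G.dist u v ≠ 1 := fun h => hadj (dist_eq_one_iff_adj.mp h)
      have hl2 : 2 ≤ G.dist u v := by omega
      have hr0 : r ≠ 0 := by omega
      obtain ⟨yu, hyu⟩ := gate_nonempty huv hreach
      obtain ⟨yv, hyv⟩ := gate_nonempty huv.symm hreach.symm
      have hcu : (G.neighborFinset u).card ≠ 0 :=
        Finset.card_ne_zero_of_mem (by simpa using hyu.1)
      have hcv : (G.neighborFinset v).card ≠ 0 :=
        Finset.card_ne_zero_of_mem (by simpa using hyv.1)
      rw [succProb, if_neg hadj, if_neg (by push_neg; exact ⟨hr0, hcu, hcv⟩)]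
      set L := G.dist u v with hL
      have hAB := hfrac u v hl2 hd
      set A := ∑ y, if y ∈ gate G u v then p u y else 0 with hA
      set B := ∑ y, if y ∈ gate G v u then p v y else 0 with hB
      have hdnnu : (0:ℝ) ≤ dplus p u := Finset.sum_nonneg (fun y _ => hnn u y)
      have hdnnv : (0:ℝ) ≤ dplus p v := Finset.sum_nonneg (fun y _ => hnn v y)
      have hAle : A ≤ dplus p u := by
        rw [hA, dplus]
        apply Finset.sum_le_sum
        intro y _
        split_ifs
        · exact le_refl _
        · exact hnn u y
      have hBle : B ≤ dplus p v := by
        rw [hB, dplus]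
        apply Finset.sum_le_sum
        intro y _
        split_ifs
        · exact le_refl _
        · exact hnn v y
      have hcpos : (0:ℝ) < c := by
        have hu' := hout u
        have hv' := hout v
        linarith
      have h4c : (0:ℝ) < 4 * c := by linarith
      set m := ((4 * c) ^ (L - 2))⁻¹ with hm
      have hmpos : 0 < m := inv_pos.mpr (pow_pos h4c _)
      -- key bound for the u-side sum
      have key1 : m / c * A ≤
          ∑ y, if y ∈ gate G u v then wt G p u y * succProb G p r y v else 0 := by
        have hEq : m / c * A = ∑ y, if y ∈ gate G u v then m / c * p u y else 0 := by
          rw [hA, Finset.mul_sum]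
          exact Finset.sum_congr rfl fun y _ => by rw [mul_ite, mul_zero]
        rw [hEq]
        apply Finset.sum_le_sum
        intro y _
        split_ifs with hy
        swap
        · exact le_refl 0
        obtain ⟨hy1, hy2⟩ := hy
        have hsucc : m ≤ succProb G p r y v := by
          have hyv' : y ≠ v := by
            intro h
            subst h
            rw [SimpleGraph.dist_self] at hy2
            omega
          have hry : G.Reachable y v := hy1.symm.reachable.trans hreach
          have hdy : G.dist y v ≤ r := by omega
          have := ih' y v hyv' hry hdy
          have he2 : G.dist y v - 1 = L - 2 := by omega
          rwa [he2, ← hm] at this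
        by_cases hdp : 0 < dplus p u
        · have hwt : wt G p u y = p u y / dplus p u := by
            unfold wt
            rw [if_pos hy1, if_pos hdp]
          rw [hwt]
          have hple : p u y / c ≤ p u y / dplus p u := by
            rw [div_le_div_iff₀ hcpos hdp]
            nlinarith [mul_le_mul_of_nonneg_left (hout u) (hnn u y)]
          calc m / c * p u y = p u y / c * m := by ring
            _ ≤ p u y / dplus p u * succProb G p r y v :=
                mul_le_mul hple hsucc hmpos.le (div_nonneg (hnn u y) hdp.le)
        · have hd0' : dplus p u = 0 := le_antisymm (not_lt.mp hdp) hdnnu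
          rw [dplus] at hd0'
          have hp0 : p u y = 0 :=
            (Finset.sum_eq_zero_iff_of_nonneg (fun y _ => hnn u y)).mp hd0' y
              (Finset.mem_univ y)
          rw [hp0, mul_zero]
          exact mul_nonneg (wt_nonneg' G p hnn u y) (succProb_nonneg' G p hnn r y v)
      -- key bound for the v-side sum
      have key2 : m / c * B ≤
          ∑ y, if y ∈ gate G v u then wt G p v y * succProb G p r u y else 0 := by
        have hEq : m / c * B = ∑ y, if y ∈ gate G v u then m / c * p v y else 0 := by
          rw [hB, Finset.mul_sum]
          exact Finset.sum_congr rfl fun y _ => by rw [mul_ite, mul_zero]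
        rw [hEq]
        apply Finset.sum_le_sum
        intro y _
        split_ifs with hy
        swap
        · exact le_refl 0
        obtain ⟨hy1, hy2⟩ := hy
        have hvu : G.dist v u = L := by rw [hL, SimpleGraph.dist_comm]
        rw [hvu] at hy2
        have hsucc : m ≤ succProb G p r u y := by
          have hyu' : u ≠ y := by
            intro h
            subst h
            rw [SimpleGraph.dist_self] at hy2
            omega
          have hry : G.Reachable u y := hreach.trans hy1.reachable
          have hduy : G.dist u y = L - 1 := by rw [SimpleGraph.dist_comm]; exact hy2
          have hdy : G.dist u y ≤ r := by omega
          have := ih' u y hyu' hry hdy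
          have he2 : G.dist u y - 1 = L - 2 := by omega
          rwa [he2, ← hm] at this
        by_cases hdp : 0 < dplus p v
        · have hwt : wt G p v y = p v y / dplus p v := by
            unfold wt
            rw [if_pos hy1, if_pos hdp]
          rw [hwt]
          have hple : p v y / c ≤ p v y / dplus p v := by
            rw [div_le_div_iff₀ hcpos hdp]
            nlinarith [mul_le_mul_of_nonneg_left (hout v) (hnn v y)]
          calc m / c * p v y = p v y / c * m := by ring
            _ ≤ p v y / dplus p v * succProb G p r u y :=
                mul_le_mul hple hsucc hmpos.le (div_nonneg (hnn v y) hdp.le)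
        · have hd0' : dplus p v = 0 := le_antisymm (not_lt.mp hdp) hdnnv
          rw [dplus] at hd0'
          have hp0 : p v y = 0 :=
            (Finset.sum_eq_zero_iff_of_nonneg (fun y _ => hnn v y)).mp hd0' y
              (Finset.mem_univ y)
          rw [hp0, mul_zero]
          exact mul_nonneg (wt_nonneg' G p hnn v y) (succProb_nonneg' G p hnn r u y)
      have he : L - 1 = (L - 2) + 1 := by omega
      have e1 : ((4 * c) ^ (L - 1))⁻¹ = m / (4 * c) := by
        rw [hm, he, pow_succ, mul_inv, div_eq_mul_inv]
      rw [e1]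
      have e2 : m / (4 * c) ≤ 1 / 2 * (m / c * A) + 1 / 2 * (m / c * B) := by
        have e3 : 1 / 2 * (m / c * A) + 1 / 2 * (m / c * B) = m * (A + B) / (2 * c) := by
          ring
        rw [e3, div_le_div_iff₀ h4c (by linarith : (0:ℝ) < 2 * c)]
        nlinarith [mul_le_mul_of_nonneg_left hAB hmpos.le,
          mul_nonneg hmpos.le hcpos.le]
      calc m / (4 * c) ≤ 1 / 2 * (m / c * A) + 1 / 2 * (m / c * B) := e2
        _ ≤ _ := add_le_add
            (mul_le_mul_of_nonneg_left key1 (by norm_num))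
            (mul_le_mul_of_nonneg_left key2 (by norm_num))
end

section
/- Let G be a graph of girth at least five and maximum average degree d ≥ 2 (i.e., some subgraph has average degree d and no subgraph has larger average degree). Then every weak 2-guidance system in G has maximum outdegree at least d/2. -/
open SimpleGraph

variable {V : Type*}

/-- The edges of `G` with both endpoints in `A`. -/
def edgesWithin (G : SimpleGraph V) (A : Set V) : Set (Sym2 V) :=
  {e | e ∈ G.edgeSet ∧ ∀ v ∈ e, v ∈ A}

/-! Two distinct neighbours `u`, `v` of a vertex `w` in a graph of girth at least five are at
distance two and `w` is their only common neighbour, so a weak 2-guidance system orients `u → w`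
or `v → w`. Hence in any vertex set `S` every vertex has at most one neighbour in `S` not pointing
to it, and `2 |E(S)| ≤ ∑_{u ∈ S} outdeg u + |S|`. For a set `S` of average degree `d` this gives
`d ≤ max outdeg + 1`, and `d - 1 ≥ d / 2` when `d ≥ 2`. -/

variable {G : SimpleGraph V} {u v w w' : V}

namespace SimpleGraph

theorem not_adj_of_adj_of_adj_of_four_le_girth (hg : 4 ≤ G.girth) (huw : G.Adj u w)
    (hwv : G.Adj w v) : ¬G.Adj u v := fun huv => by
  have hc : (Walk.cons huw (Walk.cons hwv (Walk.cons huv.symm Walk.nil))).IsCycle := by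
    simp [Walk.isCycle_def, huw.ne, hwv.ne, huv.ne, huw.ne', huv.ne']
  have := girth_le_length hc
  simp only [Walk.length_cons, Walk.length_nil] at this
  omega

theorem eq_of_adj_of_adj_of_five_le_girth (hg : 5 ≤ G.girth) (huv : u ≠ v)
    (huw : G.Adj u w) (hwv : G.Adj w v) (huw' : G.Adj u w') (hw'v : G.Adj w' v) : w = w' := by
  by_contra hne
  have hc : (Walk.cons huw (Walk.cons hwv (Walk.cons hw'v.symm
      (Walk.cons huw'.symm Walk.nil)))).IsCycle := by
    simp [Walk.isCycle_def, huw.ne, hwv.ne, huw'.ne, huw.ne', huw'.ne', hw'v.ne', huv, huv.symm,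
      hne]
  have := girth_le_length hc
  simp only [Walk.length_cons, Walk.length_nil] at this
  omega

theorem dist_eq_two_of_adj_of_adj (hg : 4 ≤ G.girth) (huv : u ≠ v) (huw : G.Adj u w)
    (hwv : G.Adj w v) : G.dist u v = 2 := by
  have hle : G.dist u v ≤ 2 := dist_le (Walk.cons huw (Walk.cons hwv Walk.nil))
  have hne0 : G.dist u v ≠ 0 :=
    (dist_ne_zero_iff_ne_and_reachable).mpr ⟨huv, ⟨Walk.cons huw (Walk.cons hwv Walk.nil)⟩⟩
  have hne1 : G.dist u v ≠ 1 :=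
    fun h => not_adj_of_adj_of_adj_of_four_le_girth hg huw hwv (dist_eq_one_iff_adj.mp h)
  omega

end SimpleGraph

theorem eq_of_mem_gate (hg : 5 ≤ G.girth) (huv : u ≠ v) (huw : G.Adj u w) (hwv : G.Adj w v)
    {y : V} (hy : y ∈ gate G u v) : y = w := by
  obtain ⟨huy, hyv⟩ := hy
  rw [dist_eq_two_of_adj_of_adj (by omega) huv huw hwv] at hyv
  exact eq_of_adj_of_adj_of_five_le_girth hg huv huy (dist_eq_one_iff_adj.mp hyv) huw hwv

variable {H : V → V → Prop}

theorem IsWeakGuidanceGate.or_of_adj_of_adj (hw : IsWeakGuidanceGate G H 2)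
    (hg : 5 ≤ G.girth) (huv : u ≠ v) (huw : G.Adj u w) (hwv : G.Adj w v) : H u w ∨ H v w := by
  have hdist := dist_eq_two_of_adj_of_adj (by omega) huv huw hwv
  rcases hw u v hdist.ge hdist.le with ⟨y, hy, hHy⟩ | ⟨y, hy, hHy⟩
  · exact .inl (eq_of_mem_gate hg huv huw hwv hy ▸ hHy)
  · exact .inr (eq_of_mem_gate hg huv.symm hwv.symm huw.symm hy ▸ hHy)

open Finset

section

variable [DecidableRel G.Adj] [DecidableRel H]

theorem IsWeakGuidanceGate.card_filter_adj_le_card_filter_add_one (hw : IsWeakGuidanceGate G H 2)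
    (hg : 5 ≤ G.girth) (s : Finset V) (w : V) :
    #{u ∈ s | G.Adj u w} ≤ #{u ∈ s | H u w} + 1 := by
  have hout : #{u ∈ {u ∈ s | G.Adj u w} | ¬H u w} ≤ 1 :=
    card_le_one.mpr fun u hu u' hu' => by
      simp only [mem_filter] at hu hu'
      by_contra huu'
      rcases hw.or_of_adj_of_adj hg huu' hu.1.2 hu'.1.2.symm with h | h
      exacts [hu.2 h, hu'.2 h]
  have hin : #{u ∈ {u ∈ s | G.Adj u w} | H u w} ≤ #{u ∈ s | H u w} := by
    refine card_le_card fun u hu => ?_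
    simp only [mem_filter] at hu ⊢
    exact ⟨hu.1.1, hu.2⟩
  have := card_filter_add_card_filter_not (s := {u ∈ s | G.Adj u w}) (H · w)
  omega

variable [Fintype V]

theorem card_filter_le_outdeg (s : Finset V) (u : V) : #{v ∈ s | H u v} ≤ outdeg H u := by
  rw [outdeg, ← Set.ncard_coe_finset]
  exact Set.ncard_le_ncard (fun v hv => (mem_filter.mp hv).2)

theorem sum_card_filter_le_sum_outdeg (s : Finset V) :
    ∑ w ∈ s, #{u ∈ s | H u w} ≤ ∑ u ∈ s, outdeg H u := by
  calc ∑ w ∈ s, #{u ∈ s | H u w} = ∑ u ∈ s, #{v ∈ s | H u v} :=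
        (sum_card_bipartiteAbove_eq_sum_card_bipartiteBelow (r := H)).symm
    _ ≤ ∑ u ∈ s, outdeg H u := sum_le_sum fun u _ => card_filter_le_outdeg s u

theorem two_mul_ncard_edgesWithin (s : Finset V) :
    2 * (edgesWithin G s).ncard = ∑ w ∈ s, #{u ∈ s | G.Adj u w} := by
  classical
  set K := (G.induce (s : Set V)).spanningCoe
  have hedges : edgesWithin G s = K.edgeSet := by
    ext e
    induction e using Sym2.ind with
    | _ a b => simp [edgesWithin, K]
  have hdeg : ∀ w, K.degree w = if w ∈ s then #{u ∈ s | G.Adj u w} else 0 := by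
    intro w
    rw [← card_neighborFinset_eq_degree, neighborFinset_eq_filter]
    split_ifs with hw
    · congr 1; ext u; simp [K, hw, adj_comm, and_comm]
    · simp [K, hw]
  rw [hedges, ← coe_edgeFinset, Set.ncard_coe_finset, ← sum_degrees_eq_twice_card_edges]
  simp only [hdeg, sum_ite_mem, univ_inter]

theorem IsWeakGuidanceGate.two_mul_ncard_edgesWithin_le (hw : IsWeakGuidanceGate G H 2)
    (hg : 5 ≤ G.girth) (s : Finset V) :
    2 * (edgesWithin G s).ncard ≤ ∑ u ∈ s, outdeg H u + #s :=
  calc 2 * (edgesWithin G s).ncard = ∑ w ∈ s, #{u ∈ s | G.Adj u w} := two_mul_ncard_edgesWithin s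
    _ ≤ ∑ w ∈ s, (#{u ∈ s | H u w} + 1) :=
      sum_le_sum fun w _ => hw.card_filter_adj_le_card_filter_add_one hg s w
    _ = ∑ w ∈ s, #{u ∈ s | H u w} + #s := by rw [sum_add_distrib, card_eq_sum_ones]
    _ ≤ ∑ u ∈ s, outdeg H u + #s := by grw [sum_card_filter_le_sum_outdeg s]

theorem IsWeakGuidanceGate.exists_two_mul_ncard_edgesWithin_le (hw : IsWeakGuidanceGate G H 2)
    (hg : 5 ≤ G.girth) {s : Finset V} (hs : s.Nonempty) :
    ∃ u ∈ s, 2 * (edgesWithin G s).ncard ≤ #s * (outdeg H u + 1) := by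
  obtain ⟨u, hu, hmax⟩ := s.exists_max_image (outdeg H) hs
  refine ⟨u, hu, ?_⟩
  have hsum : ∑ v ∈ s, outdeg H v ≤ #s * outdeg H u := by
    simpa using sum_le_card_nsmul s _ _ hmax
  linarith [hw.two_mul_ncard_edgesWithin_le hg s]

end

theorem girth_five_mad_lower_bound_general {V : Type*} [Fintype V] (G : SimpleGraph V) (d : ℝ)
    (hgirth : 5 ≤ G.girth) (hd : 2 ≤ d)
    (hmad : ∃ A : Set V, A.Nonempty ∧
      2 * ((edgesWithin G A).ncard : ℝ) = d * (A.ncard : ℝ))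
    (H : V → V → Prop)
    (hw : IsWeakGuidanceGate G H 2) :
    ∃ u, d / 2 ≤ (outdeg H u : ℝ) := by
  classical
  obtain ⟨A, hA, hdA⟩ := hmad
  obtain ⟨s, rfl⟩ := A.toFinite.exists_finset_coe
  rw [Set.ncard_coe_finset] at hdA
  have hs : s.Nonempty := coe_nonempty.mp hA
  obtain ⟨u, -, hu⟩ := hw.exists_two_mul_ncard_edgesWithin_le hgirth hs
  have hdu : d * #s ≤ (outdeg H u + 1) * #s := by
    rw [← hdA, mul_comm _ (#s : ℝ)]
    exact_mod_cast hu
  have := le_of_mul_le_mul_right hdu (by exact_mod_cast hs.card_pos)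
  exact ⟨u, by linarith⟩

/-- If `G` has girth at least five and maximum average degree `d ≥ 2` (some vertex subset
induces average degree exactly `d`, and none induces more), then every weak `2`-guidance
system of `G` has maximum outdegree at least `d/2`. -/
theorem girth_five_mad_lower_bound {V : Type*} [Fintype V] (G : SimpleGraph V) (d : ℝ)
    (hgirth : 5 ≤ G.girth) (hd : 2 ≤ d)
    (hmad : ∃ A : Set V, A.Nonempty ∧
      2 * ((edgesWithin G A).ncard : ℝ) = d * (A.ncard : ℝ))
    (hmax : ∀ A : Set V, 2 * ((edgesWithin G A).ncard : ℝ) ≤ d * (A.ncard : ℝ))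
    (H : V → V → Prop) (hpo : IsPartialOrientation G H)
    (hw : IsWeakGuidanceGate G H 2) :
    ∃ u, d / 2 ≤ (outdeg H u : ℝ) :=
  girth_five_mad_lower_bound_general G d hgirth hd hmad H hw
end

section
/- Let B be a projective plane of order n on point set A = [n²+n+1] (a family of n²+n+1 subsets (lines) of A such that any two distinct lines meet in exactly one point and every point lies on exactly n+1 lines). Let G_n be the split graph with vertex set A ∪ B, where A forms a clique, B is independent, and z ∈ A is adjacent to p ∈ B iff z ∈ p. Then every weak 2-guidance system of G_n has maximum outdegree at least (n+1)/2. -/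
open SimpleGraph

variable {V : Type*}

/-- Let `I` be the incidence relation of a projective plane of order `n ≥ 2`: both the
point set `P` and the line set `L` have `n² + n + 1` elements, any two distinct lines
meet in exactly one point, and every point lies on exactly `n + 1` lines.  Let `G` be the
split graph on `P ⊕ L` where `P` is a clique, `L` is independent, and `z ∈ P` is adjacent
to `l ∈ L` iff `I z l`.  Then every weak `2`-guidance system of `G` has maximum outdegree
at least `(n+1)/2`. -/
theorem projective_plane_split_graph_lower_bound (n : ℕ) (hn : 2 ≤ n)
    (P L : Type*) [Fintype P] [Fintype L] (I : P → L → Prop)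
    (hcardP : Fintype.card P = n ^ 2 + n + 1) (hcardL : Fintype.card L = n ^ 2 + n + 1)
    (hlines : ∀ l₁ l₂ : L, l₁ ≠ l₂ → ∃! z : P, I z l₁ ∧ I z l₂)
    (hpoints : ∀ z : P, {l : L | I z l}.ncard = n + 1)
    (G : SimpleGraph (P ⊕ L))
    (hG : ∀ a b, G.Adj a b ↔
      ((∃ z z' : P, z ≠ z' ∧ a = Sum.inl z ∧ b = Sum.inl z') ∨
       (∃ (z : P) (l : L), I z l ∧
         ((a = Sum.inl z ∧ b = Sum.inr l) ∨ (a = Sum.inr l ∧ b = Sum.inl z)))))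
    (H : P ⊕ L → P ⊕ L → Prop) (hpo : IsPartialOrientation G H)
    (hw : IsWeakGuidanceGate G H 2) :
    ∃ u, ((n : ℝ) + 1) / 2 ≤ (outdeg H u : ℝ) := by
  classical
  -- adjacency helpers
  have adjPL : ∀ (z : P) (l : L), I z l → G.Adj (Sum.inl z) (Sum.inr l) := by
    intro z l h
    exact (hG _ _).mpr (Or.inr ⟨z, l, h, Or.inl ⟨rfl, rfl⟩⟩)
  have adjLP : ∀ (z : P) (l : L), I z l → G.Adj (Sum.inr l) (Sum.inl z) := by
    intro z l h
    exact (hG _ _).mpr (Or.inr ⟨z, l, h, Or.inr ⟨rfl, rfl⟩⟩)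
  have adjI : ∀ (z : P) (l : L), G.Adj (Sum.inl z) (Sum.inr l) → I z l := by
    intro z l h
    rcases (hG _ _).mp h with ⟨z', z'', _, _, hb⟩ | ⟨z', l', hI, ⟨ha, hb⟩ | ⟨ha, _⟩⟩
    · exact absurd hb (by simp)
    · cases Sum.inl_injective ha; cases Sum.inr_injective hb; exact hI
    · exact absurd ha (by simp)
  have notadjLL : ∀ l₁ l₂ : L, ¬ G.Adj (Sum.inr l₁) (Sum.inr l₂) := by
    intro l₁ l₂ h
    rcases (hG _ _).mp h with ⟨z', z'', _, ha, _⟩ | ⟨z', l', _, ⟨ha, _⟩ | ⟨_, hb⟩⟩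
    · exact absurd ha (by simp)
    · exact absurd ha (by simp)
    · exact absurd hb (by simp)
  -- distance between two distinct lines is 2
  have dist2 : ∀ l₁ l₂ : L, l₁ ≠ l₂ → G.dist (Sum.inr l₁) (Sum.inr l₂) = 2 := by
    intro l₁ l₂ hne
    obtain ⟨z, ⟨h1, h2⟩, -⟩ := hlines l₁ l₂ hne
    have hle : G.dist (Sum.inr l₁) (Sum.inr l₂) ≤ 2 := by
      simpa using G.dist_le (Walk.cons (adjLP z l₁ h1) (adjPL z l₂ h2).toWalk)
    have hreach : G.Reachable (Sum.inr l₁) (Sum.inr l₂) :=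
      ⟨Walk.cons (adjLP z l₁ h1) (adjPL z l₂ h2).toWalk⟩
    have hne' : Sum.inr (β := L) (α := P) l₁ ≠ Sum.inr l₂ := by
      simpa using hne
    have h0 : G.dist (Sum.inr l₁) (Sum.inr l₂) ≠ 0 := by
      intro h
      exact hne' ((Reachable.dist_eq_zero_iff hreach).mp h)
    have h1' : G.dist (Sum.inr l₁) (Sum.inr l₂) ≠ 1 := by
      intro h
      exact notadjLL l₁ l₂ (SimpleGraph.dist_eq_one_iff_adj.mp h)
    omega
  -- the key combinatorial consequence of the guidance property
  have key : ∀ p : L × L, p.1 ≠ p.2 → ∃ t : L × P,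
      H (Sum.inr t.1) (Sum.inl t.2) ∧ (t.1 = p.1 ∨ t.1 = p.2) ∧ I t.2 p.1 ∧ I t.2 p.2 := by
    rintro ⟨l₁, l₂⟩ hne
    have hd := dist2 l₁ l₂ hne
    have hguide := hw (Sum.inr l₁) (Sum.inr l₂) (by rw [hd]) (by rw [hd])
    rcases hguide with ⟨y, ⟨hadj, hdy⟩, hH⟩ | ⟨y, ⟨hadj, hdy⟩, hH⟩
    · obtain ⟨z, rfl⟩ : ∃ z : P, y = Sum.inl z := by
        cases y with
        | inl z => exact ⟨z, rfl⟩
        | inr l => exact absurd hadj (notadjLL l₁ l)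
      rw [hd] at hdy
      have hadj2 : G.Adj (Sum.inl z) (Sum.inr l₂) := SimpleGraph.dist_eq_one_iff_adj.mp hdy
      refine ⟨(l₁, z), hH, Or.inl rfl, ?_, adjI z l₂ hadj2⟩
      exact adjI z l₁ hadj.symm
    · obtain ⟨z, rfl⟩ : ∃ z : P, y = Sum.inl z := by
        cases y with
        | inl z => exact ⟨z, rfl⟩
        | inr l => exact absurd hadj (notadjLL l₂ l)
      rw [SimpleGraph.dist_comm] at hd
      rw [hd] at hdy
      have hadj2 : G.Adj (Sum.inl z) (Sum.inr l₁) := SimpleGraph.dist_eq_one_iff_adj.mp hdy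
      refine ⟨(l₂, z), hH, Or.inr rfl, adjI z l₁ hadj2, ?_⟩
      exact adjI z l₂ hadj.symm
  have hPne : Nonempty P := by
    rw [← Fintype.card_pos_iff, hcardP]; positivity
  have hLne : Nonempty L := by
    rw [← Fintype.card_pos_iff, hcardL]; positivity
  choose! f hf1 hf2 hf3 hf4 using key
  -- lines through a point, as a Finset
  set lt : P → Finset L := fun z => Finset.univ.filter (fun l => I z l) with hlt
  have hltcard : ∀ z : P, (lt z).card = n + 1 := by
    intro z
    have := hpoints z
    rwa [Set.ncard_eq_toFinset_card', Set.toFinset_setOf] at this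
  -- the set of ordered pairs of distinct lines
  set Pairs : Finset (L × L) := Finset.univ.offDiag with hPairs
  have hPmem : ∀ p : L × L, p ∈ Pairs ↔ p.1 ≠ p.2 := by
    intro p; simp [hPairs, Finset.mem_offDiag]
  have hPcard : Pairs.card = (n ^ 2 + n + 1) * (n ^ 2 + n + 1) - (n ^ 2 + n + 1) := by
    rw [hPairs, Finset.offDiag_card, Finset.card_univ, hcardL]
  -- fibers of f have size at most 2n
  have hfiber : ∀ t ∈ Pairs.image f, (Pairs.filter (fun p => f p = t)).card ≤ 2 * n := by
    intro t ht
    obtain ⟨p₀, hp₀, hfp₀⟩ := Finset.mem_image.mp ht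
    have hp₀' := (hPmem p₀).mp hp₀
    have hIt : I t.2 t.1 := by
      have h3 := hf3 p₀ hp₀'
      have h4 := hf4 p₀ hp₀'
      rcases hf2 p₀ hp₀' with h | h
      · rw [hfp₀] at h h3; rw [h]; exact h3
      · rw [hfp₀] at h h4; rw [h]; exact h4
    have hsub : Pairs.filter (fun p => f p = t) ⊆
        ({t.1} ×ˢ ((lt t.2).erase t.1)) ∪ (((lt t.2).erase t.1) ×ˢ {t.1}) := by
      intro p hp
      obtain ⟨hpP, hfp⟩ := Finset.mem_filter.mp hp
      have hne := (hPmem p).mp hpP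
      have h3 := hf3 p hne
      have h4 := hf4 p hne
      rw [hfp] at h3 h4
      rcases hf2 p hne with h | h
      · rw [hfp] at h
        refine Finset.mem_union_left _ ?_
        rw [Finset.mem_product]
        refine ⟨by simp [h], ?_⟩
        rw [Finset.mem_erase]
        exact ⟨by rw [h]; exact fun hh => hne hh.symm, by simp [hlt, h4]⟩
      · rw [hfp] at h
        refine Finset.mem_union_right _ ?_
        rw [Finset.mem_product]
        refine ⟨?_, by simp [h]⟩
        rw [Finset.mem_erase]
        exact ⟨by rw [h]; exact hne, by simp [hlt, h3]⟩
    calc (Pairs.filter (fun p => f p = t)).card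
        ≤ (({t.1} ×ˢ ((lt t.2).erase t.1)) ∪ (((lt t.2).erase t.1) ×ˢ {t.1})).card :=
          Finset.card_le_card hsub
      _ ≤ ({t.1} ×ˢ ((lt t.2).erase t.1)).card + (((lt t.2).erase t.1) ×ˢ {t.1}).card :=
          Finset.card_union_le _ _
      _ = ((lt t.2).erase t.1).card + ((lt t.2).erase t.1).card := by
          rw [Finset.card_product, Finset.card_product, Finset.card_singleton, one_mul, mul_one]
      _ ≤ n + n := by
          have : ((lt t.2).erase t.1).card = n := by
            rw [Finset.card_erase_of_mem (by simp [hlt, hIt]), hltcard]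
            omega
          omega
      _ = 2 * n := by ring
  -- counting
  have hcount : Pairs.card ≤ (Pairs.image f).card * (2 * n) := by
    rw [Finset.card_eq_sum_card_image f Pairs]
    calc ∑ t ∈ Pairs.image f, (Pairs.filter (fun p => f p = t)).card
        ≤ ∑ _t ∈ Pairs.image f, 2 * n := Finset.sum_le_sum hfiber
      _ = (Pairs.image f).card * (2 * n) := by rw [Finset.sum_const, smul_eq_mul]
  -- bound the image cardinality by the sum of outdegrees
  set T : Finset (L × P) := Finset.univ.filter (fun t => H (Sum.inr t.1) (Sum.inl t.2))
    with hT
  have himT : Pairs.image f ⊆ T := by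
    intro t ht
    obtain ⟨p, hp, hfp⟩ := Finset.mem_image.mp ht
    have h1 := hf1 p ((hPmem p).mp hp)
    rw [hfp] at h1
    simp [hT, h1]
  have hTout : ∀ l : L, (T.filter (fun t => t.1 = l)).card ≤ outdeg H (Sum.inr l) := by
    intro l
    have : outdeg H (Sum.inr l) =
        (Finset.univ.filter (fun v => H (Sum.inr l) v)).card := by
      rw [outdeg, Set.ncard_eq_toFinset_card', Set.toFinset_setOf]
    rw [this]
    apply Finset.card_le_card_of_injOn (fun t => Sum.inl t.2)
    · intro t ht
      obtain ⟨htT, ht1⟩ := Finset.mem_filter.mp ht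
      have := (Finset.mem_filter.mp htT).2
      rw [ht1] at this
      simpa using this
    · intro t₁ h₁ t₂ h₂ h
      have e1 := (Finset.mem_filter.mp h₁).2
      have e2 := (Finset.mem_filter.mp h₂).2
      have : t₁.2 = t₂.2 := Sum.inl_injective h
      exact Prod.ext (e1.trans e2.symm) this
  have hTcard : T.card ≤ ∑ l : L, outdeg H (Sum.inr l) := by
    have := Finset.card_eq_sum_card_fiberwise
      (f := Prod.fst) (s := T) (t := Finset.univ) (fun x _ => Finset.mem_univ _)
    rw [this]
    exact Finset.sum_le_sum fun l _ => hTout l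
  -- put the inequalities together
  have hmain : (n ^ 2 + n + 1) * (n + 1) ≤ 2 * ∑ l : L, outdeg H (Sum.inr l) := by
    have h1 : Pairs.card ≤ (∑ l : L, outdeg H (Sum.inr l)) * (2 * n) :=
      hcount.trans (Nat.mul_le_mul_right _ ((Finset.card_le_card himT).trans hTcard))
    rw [hPcard] at h1
    have hN : (n ^ 2 + n + 1) * (n ^ 2 + n + 1) - (n ^ 2 + n + 1)
        = ((n ^ 2 + n + 1) * (n + 1)) * n := by ring_nf; omega
    rw [hN] at h1
    have hn0 : 0 < n := by omega
    have := Nat.le_of_mul_le_mul_right (by linarith [h1] : (n ^ 2 + n + 1) * (n + 1) * n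
      ≤ (2 * ∑ l : L, outdeg H (Sum.inr l)) * n) hn0
    exact this
  -- extract a vertex of large outdegree
  have hLnonempty : (Finset.univ : Finset L).Nonempty := by
    rw [← Finset.card_pos, Finset.card_univ, hcardL]; positivity
  have hsum : ∑ _l : L, (n + 1) ≤ ∑ l : L, 2 * outdeg H (Sum.inr l) := by
    rw [Finset.sum_const, Finset.card_univ, hcardL, smul_eq_mul, ← Finset.mul_sum]
    exact hmain
  obtain ⟨l, -, hl⟩ := Finset.exists_le_of_sum_le hLnonempty hsum
  refine ⟨Sum.inr l, ?_⟩
  rw [div_le_iff₀ (by norm_num : (0:ℝ) < 2)]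
  have : (n : ℝ) + 1 ≤ 2 * (outdeg H (Sum.inr l) : ℝ) := by exact_mod_cast hl
  linarith
end

section
/- Let r be a positive integer (or ∞), and let (A,B) be a partition of the vertex set of a graph G such that the equivalence relation ≡_{(A,B)} has k equivalence classes. If G[A] and G[B] each have a weak r-guidance system of maximum outdegree at most c, then G has a weak r-guidance system of maximum outdegree at most c + k. -/
open SimpleGraph

variable {V : Type*}

/-- Weak `r`-guidance system for `r : ℕ∞` (so `r = ⊤` is a weak `∞`-guidance system). -/
def IsWeakGuidanceGateE (G : SimpleGraph V) (H : V → V → Prop) (r : ℕ∞) : Prop :=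
  ∀ u v : V, 2 ≤ G.dist u v → (G.dist u v : ℕ∞) ≤ r →
    (∃ y ∈ gate G u v, H u y) ∨ (∃ y ∈ gate G v u, H v y)

/-- `u ≡_{(A,Aᶜ)} v`: both in `A` with the same neighbors in `Aᶜ`, or both in `Aᶜ` with
the same neighbors in `A`. -/
def crossEquiv (G : SimpleGraph V) (A : Set V) (u v : V) : Prop :=
  (u ∈ A ∧ v ∈ A ∧ ∀ w ∈ Aᶜ, (G.Adj u w ↔ G.Adj v w)) ∨
  (u ∈ Aᶜ ∧ v ∈ Aᶜ ∧ ∀ w ∈ A, (G.Adj u w ↔ G.Adj v w))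

/-!
Let `f` have the classes of `≡_{(A,B)}` as fibres, and let every vertex `u` point, for each
class `q`, to the second vertex of a shortest path from `u` to a nearest vertex of `q`. Together
with the guidance systems of `G[A]` and `G[B]` this has outdegree at most `c + k`.

Let `u, v` be at distance `ℓ ≥ 2` and let `P` be a shortest `u`-`v` path. If `P` stays on one
side, distances on that side agree with those of `G` along `P`, and the guidance system of that
side does the job. Otherwise `P` has an edge `xy` between the sides, say with `x ≠ u`. All
vertices of the class of `x` are adjacent to `y`, so `u` is not in that class (`P` would not be
shortest), and `u` points to some `w` with `d(w, x') < d(u, x)` for a vertex `x'` of that class.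
The walk `w ⋯ x' y ⋯ v` then has length less than `ℓ`, so `w` lies in `gate G u v`.
-/

namespace SimpleGraph

variable {V' : Type*} {G : SimpleGraph V} {G' : SimpleGraph V'} {u v : V}

lemma Reachable.dist_map_le (φ : G →g G') (h : G.Reachable u v) :
    G'.dist (φ u) (φ v) ≤ G.dist u v := by
  obtain ⟨p, hp⟩ := h.exists_walk_length_eq_dist
  rw [← hp, ← Walk.length_map φ]
  exact dist_le _

lemma dist_induce_eq_of_support_subset {S : Set V} (p : G.Walk u v)
    (hp : p.length = G.dist u v) (hS : ∀ z ∈ p.support, z ∈ S) :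
    (G.induce S).dist ⟨u, hS u p.start_mem_support⟩ ⟨v, hS v p.end_mem_support⟩ =
      G.dist u v := by
  have hlen : (p.induce S hS).length = p.length := by
    have := Walk.length_map (Embedding.induce S).toHom (p.induce S hS)
    rw [p.map_induce hS] at this
    exact this.symm
  refine le_antisymm ?_ ((p.induce S hS).reachable.dist_map_le (Embedding.induce S).toHom)
  rw [← hp, ← hlen]
  exact dist_le _

lemma Walk.sameSide_or_exists_adj_crossing (S : Set V) :
    ∀ {u v : V} (p : G.Walk u v), (∀ z ∈ p.support, (z ∈ S ↔ u ∈ S)) ∨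
      ∃ (x y : V) (p₁ : G.Walk u x) (p₂ : G.Walk y v), G.Adj x y ∧ (x ∈ S ↔ y ∉ S) ∧
        p₁.length + 1 + p₂.length = p.length
  | _, _, .nil => Or.inl (by simp)
  | u, _, .cons (v := w) huw p => by
    by_cases hw : w ∈ S ↔ u ∈ S
    · rcases p.sameSide_or_exists_adj_crossing S with hp | ⟨x, y, p₁, p₂, hxy, hside, hlen⟩
      · left
        simp only [support_cons, List.mem_cons, forall_eq_or_imp, iff_self, true_and]
        exact fun z hz => (hp z hz).trans hw
      · refine Or.inr ⟨x, y, p₁.cons huw, p₂, hxy, hside, ?_⟩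
        rw [length_cons, length_cons, ← hlen]
        omega
    · exact Or.inr ⟨u, w, .nil, p, huw, by tauto, by rw [length_nil, length_cons, add_comm]⟩

end SimpleGraph

open SimpleGraph

section Gate

variable {G : SimpleGraph V} {u v w : V}

lemma mem_gate_of_dist_lt (huw : G.Adj u w) (hlt : G.dist w v < G.dist u v) :
    w ∈ gate G u v := by
  have := huw.reachable.dist_triangle_left v
  rw [dist_eq_one_iff_adj.2 huw] at this
  exact ⟨huw, by omega⟩

lemma val_mem_gate_of_mem_gate_induce {S : Set V} {a b y : S}
    (hd : (G.induce S).dist a b = G.dist a b) (h2 : 2 ≤ G.dist a b)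
    (hy : y ∈ gate (G.induce S) a b) : (y : V) ∈ gate G a b := by
  obtain ⟨hay, hyb⟩ := hy
  have hreach : (G.induce S).Reachable y b := Reachable.of_dist_ne_zero (by omega)
  have : G.dist y b ≤ (G.induce S).dist y b := hreach.dist_map_le (Embedding.induce S).toHom
  exact mem_gate_of_dist_lt hay (by omega)

def GuidesPair (G : SimpleGraph V) (H : V → V → Prop) (u v : V) : Prop :=
  (∃ y ∈ gate G u v, H u y) ∨ (∃ y ∈ gate G v u, H v y)

lemma GuidesPair.mono {H H' : V → V → Prop} (h : GuidesPair G H u v) (hH : H ≤ H') :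
    GuidesPair G H' u v :=
  h.imp (fun ⟨y, hy, h⟩ => ⟨y, hy, hH _ _ h⟩) (fun ⟨y, hy, h⟩ => ⟨y, hy, hH _ _ h⟩)

lemma guidesPair_map_val_of_support_subset {S : Set V} {HS : S → S → Prop} {r : ℕ∞}
    (hHS : IsWeakGuidanceGateE (G.induce S) HS r) (p : G.Walk u v)
    (hp : p.length = G.dist u v) (hS : ∀ z ∈ p.support, z ∈ S) (h2 : 2 ≤ G.dist u v)
    (hr : (G.dist u v : ℕ∞) ≤ r) :
    GuidesPair G (Relation.Map HS Subtype.val Subtype.val) u v := by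
  have hd := dist_induce_eq_of_support_subset p hp hS
  have hd' := hd
  rw [dist_comm, G.dist_comm] at hd'
  rcases hHS _ _ (hd ▸ h2) (hd ▸ hr) with ⟨y, hy, hH⟩ | ⟨y, hy, hH⟩
  · exact .inl ⟨y, val_mem_gate_of_mem_gate_induce hd h2 hy, _, _, hH, rfl, rfl⟩
  · refine .inr ⟨y, val_mem_gate_of_mem_gate_induce hd' ?_ hy, _, _, hH, rfl, rfl⟩
    rwa [G.dist_comm]

end Gate

section StepToward

variable {G : SimpleGraph V} {T : Set V} {u v w : V}

/-- `w` is the second vertex of a shortest path from `u` to a nearest vertex of `T`. -/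
def IsStepToward (G : SimpleGraph V) (T : Set V) (u w : V) : Prop :=
  G.Adj u w ∧
    ∃ x ∈ T, G.Reachable w x ∧ ∀ y ∈ T, G.Reachable u y → G.dist w x < G.dist u y

lemma exists_isStepToward {x : V} (hu : u ∉ T) (hx : x ∈ T) (hux : G.Reachable u x) :
    ∃ w, IsStepToward G T u w := by
  obtain ⟨x₀, ⟨hx₀, hux₀⟩, hmin⟩ :=
    (measure fun y => G.dist u y).wf.has_min {y | y ∈ T ∧ G.Reachable u y} ⟨x, hx, hux⟩
  obtain ⟨p, hp⟩ := hux₀.exists_walk_length_eq_dist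
  cases p with
  | nil => exact absurd hx₀ hu
  | cons huw p =>
    refine ⟨_, huw, x₀, hx₀, p.reachable, fun y hy huy => ?_⟩
    have : G.dist u x₀ ≤ G.dist u y := not_lt.1 (hmin y ⟨hy, huy⟩)
    have := dist_le p
    simp only [Walk.length_cons] at hp
    omega

open Classical in
/-- A chosen step from `u` towards `T`, or `u` itself if there is none. -/
noncomputable def stepToward (G : SimpleGraph V) (T : Set V) (u : V) : V :=
  if h : ∃ w, IsStepToward G T u w then h.choose else u

lemma IsStepToward.stepToward (h : IsStepToward G T u w) :
    IsStepToward G T u (stepToward G T u) := by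
  rw [_root_.stepToward, dif_pos ⟨w, h⟩]
  exact Exists.choose_spec _

lemma mem_gate_of_isStepToward {x y : V} (hT : ∀ x' ∈ T, G.Adj x' y) (hx : x ∈ T)
    (p₁ : G.Walk u x) (p₂ : G.Walk y v) (hlen : p₁.length + 1 + p₂.length = G.dist u v)
    (hw : IsStepToward G T u w) : w ∈ gate G u v := by
  obtain ⟨huw, x', hx', hwx', hmin⟩ := hw
  obtain ⟨q, hq⟩ := hwx'.exists_walk_length_eq_dist
  have h₁ : G.dist w x' < p₁.length := (hmin x hx p₁.reachable).trans_le (dist_le p₁)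
  have h₂ : G.dist w v ≤ G.dist w x' + (p₂.length + 1) := by
    simpa [hq] using dist_le (q.append (p₂.cons (hT x' hx')))
  exact mem_gate_of_dist_lt huw (by omega)

end StepToward

section Orientations

variable {G : SimpleGraph V}

lemma IsPartialOrientation.sup {H₁ H₂ : V → V → Prop} (h₁ : IsPartialOrientation G H₁)
    (h₂ : IsPartialOrientation G H₂) : IsPartialOrientation G (H₁ ⊔ H₂) :=
  fun _ _ h => h.elim (fun h => h₁ h) (fun h => h₂ h)

lemma IsPartialOrientation.map_val {S : Set V} {HS : S → S → Prop}
    (h : IsPartialOrientation (G.induce S) HS) :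
    IsPartialOrientation G (Relation.Map HS Subtype.val Subtype.val) := by
  rintro _ _ ⟨a, b, hab, rfl, rfl⟩
  exact h hab

lemma outdeg_sup_le (H₁ H₂ : V → V → Prop) (u : V) :
    outdeg (H₁ ⊔ H₂) u ≤ outdeg H₁ u + outdeg H₂ u :=
  Set.ncard_union_le _ _

lemma outdeg_map_val_of_mem {S : Set V} (HS : S → S → Prop) {u : V} (hu : u ∈ S) :
    outdeg (Relation.Map HS Subtype.val Subtype.val) u = outdeg HS ⟨u, hu⟩ := by
  have : {w | Relation.Map HS Subtype.val Subtype.val u w} =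
      Subtype.val '' {w | HS ⟨u, hu⟩ w} := by
    ext w
    simp [Relation.Map, hu]
  rw [outdeg, this, Set.ncard_image_of_injective _ Subtype.val_injective, outdeg]

lemma outdeg_map_val_of_notMem {S : Set V} (HS : S → S → Prop) {u : V} (hu : u ∉ S) :
    outdeg (Relation.Map HS Subtype.val Subtype.val) u = 0 := by
  have : {w | Relation.Map HS Subtype.val Subtype.val u w} = ∅ := by
    ext w
    simp only [Relation.Map, Set.mem_ofPred_eq, Set.mem_empty_iff_false, iff_false]
    rintro ⟨a, b, -, rfl, -⟩
    exact hu a.2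
  rw [outdeg, this, Set.ncard_empty]

lemma outdeg_map_val_sup_map_val_compl_le {A : Set V} {HA : A → A → Prop}
    {HB : ↥Aᶜ → ↥Aᶜ → Prop} {c : ℕ} (hA : ∀ a, outdeg HA a ≤ c)
    (hB : ∀ b, outdeg HB b ≤ c)
    (u : V) :
    outdeg (Relation.Map HA Subtype.val Subtype.val ⊔ Relation.Map HB Subtype.val Subtype.val) u
      ≤ c := by
  refine (outdeg_sup_le _ _ u).trans ?_
  by_cases hu : u ∈ A
  · rw [outdeg_map_val_of_mem HA hu, outdeg_map_val_of_notMem HB (not_not.2 hu)]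
    exact hA _
  · rw [outdeg_map_val_of_notMem HA hu, outdeg_map_val_of_mem HB hu, zero_add]
    exact hB _

variable {κ : Type*}

def fibreStep (G : SimpleGraph V) (f : V → κ) (u w : V) : Prop :=
  ∃ q, IsStepToward G (f ⁻¹' {q}) u w ∧ stepToward G (f ⁻¹' {q}) u = w

lemma isPartialOrientation_fibreStep (f : V → κ) : IsPartialOrientation G (fibreStep G f) :=
  fun _ _ ⟨_, h, _⟩ => h.1

lemma outdeg_fibreStep_le [Finite κ] (f : V → κ) (u : V) :
    outdeg (fibreStep G f) u ≤ Nat.card κ := by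
  have hsub : {w | fibreStep G f u w} ⊆ Set.range fun q => stepToward G (f ⁻¹' {q}) u :=
    fun _ ⟨q, _, hq⟩ => ⟨q, hq⟩
  calc outdeg (fibreStep G f) u ≤ (Set.range fun q => stepToward G (f ⁻¹' {q}) u).ncard :=
        Set.ncard_le_ncard hsub (Set.finite_range _)
    _ ≤ (Set.univ : Set κ).ncard := by
        rw [← Set.image_univ]
        exact Set.ncard_image_le Set.finite_univ
    _ = Nat.card κ := Set.ncard_univ κ

lemma IsStepToward.fibreStep {f : V → κ} {q : κ} {u w : V}
    (h : IsStepToward G (f ⁻¹' {q}) u w) :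
    fibreStep G f u (_root_.stepToward G (f ⁻¹' {q}) u) :=
  ⟨q, h.stepToward, rfl⟩

end Orientations

section Crossing

variable {G : SimpleGraph V} {A : Set V} {κ : Type*} {f : V → κ} {u v x y : V}

lemma crossEquiv.adj {x' : V} (h : crossEquiv G A x x') (hxy : G.Adj x y)
    (hside : x ∈ A ↔ y ∉ A) : G.Adj x' y := by
  rcases h with ⟨hx, -, h⟩ | ⟨hx, -, h⟩
  · exact (h y (hside.1 hx)).1 hxy
  · exact (h y (of_not_not (mt hside.2 hx))).1 hxy

lemma exists_fibreStep_mem_gate (hf : ∀ a b, crossEquiv G A a b ↔ f a = f b)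
    (hxy : G.Adj x y) (hside : x ∈ A ↔ y ∉ A) (p₁ : G.Walk u x) (p₂ : G.Walk y v)
    (hlen : p₁.length + 1 + p₂.length = G.dist u v) (hp₁ : p₁.length ≠ 0) :
    ∃ w ∈ gate G u v, fibreStep G f u w := by
  have hT : ∀ x' ∈ f ⁻¹' {f x}, G.Adj x' y := fun x' hx' =>
    ((hf x x').2 hx'.symm).adj hxy hside
  have hu : u ∉ f ⁻¹' {f x} := fun hu => by
    have := dist_le (p₂.cons (hT u hu))
    simp only [Walk.length_cons] at this
    omega
  obtain ⟨w, hw⟩ := exists_isStepToward hu rfl p₁.reachable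
  exact ⟨_, mem_gate_of_isStepToward hT rfl p₁ p₂ hlen hw.stepToward, hw.fibreStep⟩

lemma guidesPair_fibreStep_of_crossing (hf : ∀ a b, crossEquiv G A a b ↔ f a = f b)
    (hxy : G.Adj x y) (hside : x ∈ A ↔ y ∉ A) (p₁ : G.Walk u x) (p₂ : G.Walk y v)
    (hlen : p₁.length + 1 + p₂.length = G.dist u v) (h2 : 2 ≤ G.dist u v) :
    GuidesPair G (fibreStep G f) u v := by
  by_cases hp₁ : p₁.length = 0
  · refine .inr (exists_fibreStep_mem_gate hf hxy.symm (by tauto) p₂.reverse p₁.reverse ?_ ?_)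
    · rw [Walk.length_reverse, Walk.length_reverse, G.dist_comm]
      omega
    · rw [Walk.length_reverse]
      omega
  · exact .inl (exists_fibreStep_mem_gate hf hxy hside p₁ p₂ hlen hp₁)

end Crossing

theorem partition_weakGuidance_general {V : Type*} (G : SimpleGraph V) (r : ℕ∞)
    (A : Set V) (k c : ℕ)
    (hk : ∃ f : V → Fin k, ∀ u v, (crossEquiv G A u v ↔ f u = f v))
    (hA : ∃ HA : ↥A → ↥A → Prop, IsPartialOrientation (G.induce A) HA ∧
      IsWeakGuidanceGateE (G.induce A) HA r ∧ ∀ u, outdeg HA u ≤ c)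
    (hB : ∃ HB : ↥(Aᶜ) → ↥(Aᶜ) → Prop, IsPartialOrientation (G.induce Aᶜ) HB ∧
      IsWeakGuidanceGateE (G.induce Aᶜ) HB r ∧ ∀ u, outdeg HB u ≤ c) :
    ∃ H : V → V → Prop, IsPartialOrientation G H ∧ IsWeakGuidanceGateE G H r ∧
      ∀ u, outdeg H u ≤ c + k := by
  obtain ⟨f, hf⟩ := hk
  obtain ⟨HA, hPA, hGA, hDA⟩ := hA
  obtain ⟨HB, hPB, hGB, hDB⟩ := hB
  refine ⟨Relation.Map HA Subtype.val Subtype.val ⊔ Relation.Map HB Subtype.val Subtype.val ⊔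
      fibreStep G f, (hPA.map_val.sup hPB.map_val).sup (isPartialOrientation_fibreStep f),
      fun u v h2 hr => ?_, fun u => ?_⟩
  · have hne : G.dist u v ≠ 0 := by omega
    obtain ⟨p, hp⟩ := exists_walk_of_dist_ne_zero hne
    rcases p.sameSide_or_exists_adj_crossing A with hS | ⟨x, y, p₁, p₂, hxy, hside, hlen⟩
    · by_cases hu : u ∈ A
      · exact (guidesPair_map_val_of_support_subset hGA p hp (fun z hz => (hS z hz).2 hu) h2
          hr).mono (le_sup_left.trans le_sup_left)
      · exact (guidesPair_map_val_of_support_subset hGB p hp (fun z hz => mt (hS z hz).1 hu) h2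
          hr).mono (le_sup_right.trans le_sup_left)
    · exact (guidesPair_fibreStep_of_crossing hf hxy hside p₁ p₂ (hp ▸ hlen) h2).mono
        le_sup_right
  · exact (outdeg_sup_le _ _ u).trans (add_le_add (outdeg_map_val_sup_map_val_compl_le hDA hDB u)
      ((outdeg_fibreStep_le f u).trans_eq (Nat.card_fin k)))

/-- Let `r` be a positive integer or `∞`, and `(A, Aᶜ)` a vertex partition of `G` whose
cross-equivalence `≡_{(A,Aᶜ)}` has (at most) `k` classes.  If the induced subgraphs on `A`
and `Aᶜ` each have a weak `r`-guidance system of maximum outdegree at most `c`, then `G`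
has a weak `r`-guidance system of maximum outdegree at most `c + k`. -/
theorem partition_weakGuidance {V : Type*} [Fintype V] (G : SimpleGraph V) (r : ℕ∞)
    (hr : 1 ≤ r) (A : Set V) (k c : ℕ)
    (hk : ∃ f : V → Fin k, ∀ u v, (crossEquiv G A u v ↔ f u = f v))
    (hA : ∃ HA : ↥A → ↥A → Prop, IsPartialOrientation (G.induce A) HA ∧
      IsWeakGuidanceGateE (G.induce A) HA r ∧ ∀ u, outdeg HA u ≤ c)
    (hB : ∃ HB : ↥(Aᶜ) → ↥(Aᶜ) → Prop, IsPartialOrientation (G.induce Aᶜ) HB ∧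
      IsWeakGuidanceGateE (G.induce Aᶜ) HB r ∧ ∀ u, outdeg HB u ≤ c) :
    ∃ H : V → V → Prop, IsPartialOrientation G H ∧ IsWeakGuidanceGateE G H r ∧
      ∀ u, outdeg H u ≤ c + k :=
  partition_weakGuidance_general G r A k c hk hA hB
end

section
/- For every d ≥ 0 and a ≥ max(2, 2d−1), there exists a graph H_{d,a} with a vertex 2-coloring (labels 1 and 2, each used on half the vertices) such that |V(H_{d,a})| ≤ 8a^d − 6, and for every partial orientation of H_{d,a} of maximum outdegree less than d, there exist vertices u with label 1 and v with label 2 at distance exactly two such that no common neighbor x of u and v satisfies (u,x) or (v,x) being a directed edge. Moreover, H_{d,a} has clique-width at most 6. -/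
open SimpleGraph

variable {V : Type*}

/-- Constructible `k`-labeled graphs: `Constructible k S adj lab` means the graph with
vertex set `S`, adjacency `adj` and labeling `lab` (both only relevant on `S`) can be
built from single vertices by disjoint union, relabeling, and adding all edges between
two label classes. -/
inductive Constructible {V : Type*} [DecidableEq V] (k : ℕ) :
    Finset V → (V → V → Prop) → (V → Fin k) → Prop
  | single (v : V) (lab : V → Fin k) :
      Constructible k {v} (fun _ _ => False) lab
  | union {S T : Finset V} {adj₁ adj₂ : V → V → Prop} {lab : V → Fin k} :
      Disjoint S T →
      Constructible k S adj₁ lab → Constructible k T adj₂ lab →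
      Constructible k (S ∪ T) (fun a b => adj₁ a b ∨ adj₂ a b) lab
  | relabel {S : Finset V} {adj : V → V → Prop} {lab : V → Fin k} (i j : Fin k) :
      Constructible k S adj lab →
      Constructible k S adj (fun v => if lab v = i then j else lab v)
  | addEdges {S : Finset V} {adj : V → V → Prop} {lab : V → Fin k} (i j : Fin k) :
      Constructible k S adj lab →
      Constructible k S (fun a b => adj a b ∨ (a ∈ S ∧ b ∈ S ∧ a ≠ b ∧
        ((lab a = i ∧ lab b = j) ∨ (lab a = j ∧ lab b = i)))) lab
  | congr {S : Finset V} {adj adj' : V → V → Prop} {lab lab' : V → Fin k} :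
      Constructible k S adj lab →
      (∀ a b, a ∈ S → b ∈ S → (adj a b ↔ adj' a b)) →
      (∀ a, a ∈ S → lab a = lab' a) →
      Constructible k S adj' lab'

/-- `G` has clique-width at most `k`. -/
def CliqueWidthLE {V : Type*} [DecidableEq V] [Fintype V] (G : SimpleGraph V) (k : ℕ) :
    Prop :=
  ∃ (adj : V → V → Prop) (lab : V → Fin k),
    Constructible k Finset.univ adj lab ∧ ∀ a b, G.Adj a b ↔ adj a b

/-!
`H_{d+1,a}` consists of `a` copies of `H_{d,a}`, each with two hubs (the hub of label `c` is
adjacent to the copy's vertices of the other label), together with two global hubs, the one of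
label `c` adjacent to the copy hubs of label `c`. Fix a partial orientation of maximum outdegree
at most `d`. Each global hub points into at most `d` copies, so as `2d < a` some copy `i` is
pointed into by neither. If a vertex `w` of copy `i` does not point to the hub of copy `i` adjacent
to it, then `w` and the global hub of the other label form an unguided pair: their only common
neighbour is that hub. Otherwise every vertex of copy `i` spends an out-arc on a hub, so the
orientation restricted to copy `i` has maximum outdegree below `d`, and induction yields an
unguided pair inside the copy; its two vertices have different labels, so no hub is a common
neighbour.

For clique-width, copies are built with labels `0, 1`; the copy hubs get the fresh labels `2, 3`
and the global hubs `4, 5`, each joined to its neighbours by one edge-addition, after which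
`2, 4` are merged into `0` and `3, 5` into `1`.
-/

section Guidance

variable {α β : Type*}

lemma SimpleGraph.dist_eq_two_iff {G : SimpleGraph α} {u v : α} :
    G.dist u v = 2 ↔ u ≠ v ∧ ¬G.Adj u v ∧ (G.commonNeighbors u v).Nonempty := by
  rw [SimpleGraph.dist, ENat.toNat_eq_iff two_ne_zero]
  exact edist_eq_two_iff

lemma SimpleGraph.Embedding.dist_eq_two {G : SimpleGraph α} {G' : SimpleGraph β} (f : G ↪g G')
    {u v : α} (h : G.dist u v = 2) : G'.dist (f u) (f v) = 2 := by
  obtain ⟨hne, hadj, x, hx⟩ := dist_eq_two_iff.1 h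
  exact dist_eq_two_iff.2
    ⟨f.injective.ne hne, by simpa using hadj, f x, by simpa [mem_commonNeighbors] using hx⟩

lemma ncard_le_outdeg [Finite α] {g : β → α} (hg : Function.Injective g)
    (H : α → α → Prop) (u : α) : {y | H u (g y)}.ncard ≤ outdeg H u := by
  rw [← Set.ncard_image_of_injective _ hg]
  exact Set.ncard_le_ncard (by rintro _ ⟨y, hy, rfl⟩; exact hy) (Set.toFinite _)

lemma ncard_lt_outdeg [Finite α] {g : β → α} (hg : Function.Injective g)
    {H : α → α → Prop} {u t : α} (ht : H u t) (htg : t ∉ Set.range g) :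
    {y | H u (g y)}.ncard < outdeg H u := by
  rw [← Set.ncard_image_of_injective _ hg]
  refine Set.ncard_lt_ncard ?_ (Set.toFinite _)
  rw [Set.ssubset_iff_of_subset (by rintro _ ⟨y, hy, rfl⟩; exact hy)]
  exact ⟨t, ht, fun ⟨y, _, hy⟩ => htg ⟨y, hy⟩⟩

/-- `H` violates the gate condition of `IsWeakGuidanceGate G H 2` at `u, v`. -/
def IsUnguidedPair (G : SimpleGraph α) (H : α → α → Prop) (u v : α) : Prop :=
  G.dist u v = 2 ∧ ∀ x, G.Adj u x → G.Adj v x → ¬H u x ∧ ¬H v x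

lemma IsUnguidedPair.symm {G : SimpleGraph α} {H : α → α → Prop} {u v : α}
    (h : IsUnguidedPair G H u v) : IsUnguidedPair G H v u :=
  ⟨G.dist_comm ▸ h.1, fun x hv hu => (h.2 x hu hv).symm⟩

def ForcesOutdegree (G : SimpleGraph α) (lab : α → Fin 2) (d : ℕ) : Prop :=
  ∀ H, IsPartialOrientation G H → (∀ u, outdeg H u < d) →
    ∃ u v, lab u = 0 ∧ lab v = 1 ∧ IsUnguidedPair G H u v

lemma forcesOutdegree_zero [Nonempty α] (G : SimpleGraph α) (lab : α → Fin 2) :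
    ForcesOutdegree G lab 0 :=
  fun _ _ hdeg => absurd (hdeg (Classical.arbitrary α)) (Nat.not_lt_zero _)

lemma ForcesOutdegree.iso [Finite β] {G : SimpleGraph α} {G' : SimpleGraph β}
    {lab : α → Fin 2} {d : ℕ} (h : ForcesOutdegree G lab d) (φ : G ≃g G') :
    ForcesOutdegree G' (lab ∘ φ.symm) d := by
  intro H hH hdeg
  obtain ⟨u, v, hu, hv, hdist, hcommon⟩ := h (fun x y => H (φ x) (φ y))
    (fun _ _ hxy => φ.map_adj_iff.1 (hH hxy))
    (fun u => (ncard_le_outdeg φ.injective H (φ u)).trans_lt (hdeg _))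
  refine ⟨φ u, φ v, by simpa, by simpa, φ.toEmbedding.dist_eq_two hdist, fun x hux hvx => ?_⟩
  rw [← φ.apply_symm_apply x] at hux hvx ⊢
  exact hcommon _ (φ.map_adj_iff.1 hux) (φ.map_adj_iff.1 hvx)

end Guidance

namespace Constructible

variable {α β ι : Type*} [DecidableEq α] [DecidableEq β] {k : ℕ} {S : Finset α}
  {r : α → α → Prop} {L : α → Fin k}

theorem map (h : Constructible k S r L) (f : α ↪ β) {L' : β → Fin k}
    (hL : ∀ x ∈ S, L' (f x) = L x) : Constructible k (S.map f) (Relation.Map r f f) L' := by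
  induction h generalizing L' with
  | single v lab =>
    rw [Finset.map_singleton]
    exact (single (f v) L').congr (fun _ _ _ _ => by simp [Relation.Map]) fun _ _ => rfl
  | union hST _ _ ih₁ ih₂ =>
    rw [Finset.map_union]
    refine (union ((Finset.disjoint_map f).2 hST)
      (ih₁ fun x hx => hL x (Finset.mem_union_left _ hx))
      (ih₂ fun x hx => hL x (Finset.mem_union_right _ hx))).congr
      (fun _ _ _ _ => ?_) fun _ _ => rfl
    simp only [Relation.Map, or_and_right, exists_or]
  | relabel i j _ ih =>
    refine ((ih (L' := Function.extend f _ L') fun x _ =>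
      f.injective.extend_apply _ _ x).relabel i j).congr (fun _ _ _ _ => Iff.rfl) fun y hy => ?_
    obtain ⟨x, hx, rfl⟩ := Finset.mem_map.1 hy
    rw [f.injective.extend_apply, hL x hx]
  | addEdges i j _ ih =>
    refine ((ih hL).addEdges i j).congr (fun y z hy hz => ?_) fun _ _ => rfl
    obtain ⟨x, hx, rfl⟩ := Finset.mem_map.1 hy
    obtain ⟨x', hx', rfl⟩ := Finset.mem_map.1 hz
    simp [Relation.map_apply_apply f.injective f.injective, hL x hx, hL x' hx', hx, hx']
  | congr _ hr hl ih =>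
    refine (ih fun x hx => (hL x hx).trans (hl x hx).symm).congr (fun y z hy hz => ?_)
      fun _ _ => rfl
    obtain ⟨x, hx, rfl⟩ := Finset.mem_map.1 hy
    obtain ⟨x', hx', rfl⟩ := Finset.mem_map.1 hz
    simp [Relation.map_apply_apply f.injective f.injective, hr x x' hx hx']

theorem biUnion [DecidableEq ι] {I : Finset ι} (hI : I.Nonempty) {S : ι → Finset α}
    {r : ι → α → α → Prop} (hS : (I : Set ι).PairwiseDisjoint S)
    (h : ∀ i ∈ I, Constructible k (S i) (r i) L) :
    Constructible k (I.biUnion S) (fun x y => ∃ i ∈ I, r i x y) L := by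
  induction hI using Finset.Nonempty.cons_induction with
  | singleton i =>
    rw [Finset.singleton_biUnion]
    exact (h i (Finset.mem_singleton_self i)).congr (fun _ _ _ _ => by simp) fun _ _ => rfl
  | cons i I hi _ ih =>
    have hdisj : Disjoint (S i) (I.biUnion S) := (Finset.disjoint_biUnion_right _ _ _).2
      fun j hj => hS (by simp) (by simp [hj]) (ne_of_mem_of_not_mem hj hi).symm
    have hu := union hdisj (h i (by simp))
      (ih (hS.subset (by simp)) fun j hj => h j (by simp [hj]))
    rw [← Finset.biUnion_insert, ← Finset.cons_eq_insert _ _ hi] at hu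
    exact hu.congr (fun _ _ _ _ => by simp [or_and_right, exists_or]) fun _ _ => rfl

theorem attach (h : Constructible k S r L) {v : α} (hv : v ∉ S) {i : Fin k} (hi : L v = i)
    (hfresh : ∀ x ∈ S, L x ≠ i) (j : Fin k) :
    Constructible k (insert v S)
      (fun x y => r x y ∨ (x = v ∧ y ∈ S ∧ L y = j) ∨ (y = v ∧ x ∈ S ∧ L x = j))
      L := by
  have hu := ((single v L).union (Finset.disjoint_singleton_left.2 hv) h).addEdges i j
  rw [← Finset.insert_eq] at hu
  refine hu.congr (fun x y hx hy => ?_) fun _ _ => rfl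
  have hlabel : ∀ z ∈ insert v S, L z = i ↔ z = v := fun z hz => by
    rcases Finset.mem_insert.1 hz with rfl | hz
    · simp [hi]
    · exact ⟨fun h => (hfresh z hz h).elim, fun h => (hv (h ▸ hz)).elim⟩
  rw [hlabel x hx, hlabel y hy]
  rcases Finset.mem_insert.1 hx with rfl | hxS <;> rcases Finset.mem_insert.1 hy with rfl | hyS
  · simp [hv]
  · simp [hv, hyS, ne_of_mem_of_not_mem hyS hv, (ne_of_mem_of_not_mem hyS hv).symm]
  · simp [hv, hxS, ne_of_mem_of_not_mem hxS hv]
  · simp [hxS, hyS, ne_of_mem_of_not_mem hxS hv, ne_of_mem_of_not_mem hyS hv]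

end Constructible

lemma CliqueWidthLE.iso {α β : Type*} [DecidableEq α] [Fintype α] [DecidableEq β] [Fintype β]
    {G : SimpleGraph α} {G' : SimpleGraph β} {k : ℕ} (h : CliqueWidthLE G k) (φ : G ≃g G') :
    CliqueWidthLE G' k := by
  obtain ⟨adj, lab, hc, hadj⟩ := h
  have hmap := hc.map φ.toEquiv.toEmbedding (L' := lab ∘ φ.symm) fun x _ => by simp
  rw [Finset.map_univ_equiv] at hmap
  refine ⟨_, _, hmap, fun x y => ?_⟩
  rw [← φ.apply_symm_apply x, ← φ.apply_symm_apply y, φ.map_adj_iff, hadj]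
  exact (Relation.map_apply_apply φ.injective φ.injective _ _ _).symm

section Step

abbrev StepVertex (α : Type*) (a : ℕ) : Type _ := (Fin a × (α ⊕ Fin 2)) ⊕ Fin 2

variable {α : Type*} (G : SimpleGraph α) (lab : α → Fin 2) (a : ℕ)

def augmentGraph : SimpleGraph (α ⊕ Fin 2) where
  Adj
    | .inl x, .inl y => G.Adj x y
    | .inl x, .inr c | .inr c, .inl x => lab x ≠ c
    | .inr _, .inr _ => False
  symm := ⟨by rintro (x | c) (y | c') h <;> first | exact h | exact h.symm⟩
  loopless := ⟨by rintro (x | c) h; exacts [h.ne rfl, h]⟩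

/-- `H_{d+1,a}` built from `G = H_{d,a}`: `.inl (i, .inr 0)` and `.inl (i, .inr 1)` are the
vertices `v₃, v₄` of copy `i`, and `.inr 0`, `.inr 1` are `v₅, v₆`. The paper's labels `1, 2`
are `0, 1` here. -/
def stepGraph : SimpleGraph (StepVertex α a) where
  Adj
    | .inl (i, x), .inl (j, y) => i = j ∧ (augmentGraph G lab).Adj x y
    | .inl (_, x), .inr c | .inr c, .inl (_, x) => x = .inr c
    | .inr _, .inr _ => False
  symm := ⟨by
    rintro (⟨i, x⟩ | c) (⟨j, y⟩ | c') h
    exacts [⟨h.1.symm, h.2.symm⟩, h, h, h]⟩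
  loopless := ⟨by rintro (⟨i, x⟩ | c) h; exacts [h.2.ne rfl, h]⟩

def stepLabel : StepVertex α a → Fin 2 :=
  Sum.elim (fun p => Sum.elim lab id p.2) id

def copyEmbedding (i : Fin a) : G ↪g stepGraph G lab a where
  toFun x := .inl (i, .inl x)
  inj' _ _ h := by simpa using h
  map_rel_iff' := and_iff_right rfl

@[simp]
lemma copyEmbedding_apply (i : Fin a) (x : α) : copyEmbedding G lab a i x = .inl (i, .inl x) :=
  rfl

lemma Fintype.card_stepVertex [Fintype α] :
    Fintype.card (StepVertex α a) = a * (Fintype.card α + 2) + 2 := by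
  simp [Fintype.card_sum, Fintype.card_prod]

end Step

section LowerBound

variable {α : Type*} {G : SimpleGraph α} {lab : α → Fin 2} {a : ℕ}

lemma isUnguidedPair_hub (G : SimpleGraph α) {H : StepVertex α a → StepVertex α a → Prop}
    {i : Fin a} {c : Fin 2} {w : α} (hw : lab w ≠ c) (hhub : ¬H (.inr c) (.inl (i, .inr c)))
    (hcopy : ¬H (.inl (i, .inl w)) (.inl (i, .inr c))) :
    IsUnguidedPair (stepGraph G lab a) H (.inr c) (.inl (i, .inl w)) := by
  refine ⟨dist_eq_two_iff.2 ⟨Sum.inr_ne_inl, by simp [stepGraph], .inl (i, .inr c), ?_⟩, ?_⟩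
  · simp [mem_commonNeighbors, stepGraph, augmentGraph, hw]
  · rintro (⟨j, y | c'⟩ | c') hc hw' <;> simp [stepGraph, augmentGraph] at hc hw'
    obtain ⟨rfl, rfl⟩ := And.intro hw'.1 hc
    exact ⟨hhub, hcopy⟩

lemma IsUnguidedPair.copy {H : StepVertex α a → StepVertex α a → Prop} {i : Fin a} {u v : α}
    (huv : lab u ≠ lab v)
    (h : IsUnguidedPair G (fun x y => H (.inl (i, .inl x)) (.inl (i, .inl y))) u v) :
    IsUnguidedPair (stepGraph G lab a) H (.inl (i, .inl u)) (.inl (i, .inl v)) := by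
  refine ⟨(copyEmbedding G lab a i).dist_eq_two h.1, ?_⟩
  rintro (⟨j, y | c⟩ | c) hu hv <;> simp [stepGraph, augmentGraph] at hu hv
  · obtain ⟨rfl, hu⟩ := hu
    exact h.2 y hu hv.2
  · exact (huv (by omega)).elim

lemma exists_copy_unreached [Finite α] {H : StepVertex α a → StepVertex α a → Prop} {d : ℕ}
    (hdeg : ∀ u, outdeg H u < d + 1) (hda : 2 * d < a) :
    ∃ i : Fin a, ∀ c, ¬H (.inr c) (.inl (i, .inr c)) := by
  by_contra! hcover
  have hhub (c : Fin 2) : {i : Fin a | H (.inr c) (.inl (i, .inr c))}.ncard ≤ d :=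
    Nat.le_of_lt_succ <|
      (ncard_le_outdeg (fun i j hij => by simpa using hij) H _).trans_lt (hdeg _)
  have hunion : (Set.univ : Set (Fin a)) ⊆
      {i | H (.inr 0) (.inl (i, .inr 0))} ∪ {i | H (.inr 1) (.inl (i, .inr 1))} := by
    intro i _
    obtain ⟨c, hc⟩ := hcover i
    obtain rfl | rfl : c = 0 ∨ c = 1 := by omega
    exacts [Or.inl hc, Or.inr hc]
  have := (Set.ncard_le_ncard hunion).trans (Set.ncard_union_le _ _)
  simp only [Set.ncard_univ, Nat.card_eq_fintype_card, Fintype.card_fin] at this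
  linarith [hhub 0, hhub 1]

theorem ForcesOutdegree.step [Finite α] {d : ℕ} (h : ForcesOutdegree G lab d) (hda : 2 * d < a) :
    ForcesOutdegree (stepGraph G lab a) (stepLabel lab a) (d + 1) := by
  intro H hH hdeg
  obtain ⟨i, hi⟩ := exists_copy_unreached hdeg hda
  by_cases hexit : ∃ c w, lab w ≠ c ∧ ¬H (.inl (i, .inl w)) (.inl (i, .inr c))
  · obtain ⟨c, w, hw, hHw⟩ := hexit
    have hpair := isUnguidedPair_hub G hw (hi c) hHw
    obtain rfl | rfl : c = 0 ∨ c = 1 := by omega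
    · exact ⟨.inr 0, .inl (i, .inl w), rfl, Fin.eq_one_of_ne_zero _ hw, hpair⟩
    · exact ⟨.inl (i, .inl w), .inr 1, (by omega : lab w = 0), rfl, hpair.symm⟩
  · push Not at hexit
    have hdeg' (u : α) : outdeg (fun x y => H (.inl (i, .inl x)) (.inl (i, .inl y))) u < d := by
      have hlt := ncard_lt_outdeg (copyEmbedding G lab a i).injective
        (hexit (lab u).rev u (by simp [Fin.ext_iff]; omega)) (by simp)
      exact Nat.lt_of_lt_of_le hlt (Nat.le_of_lt_succ (hdeg _))
    obtain ⟨u, v, hu, hv, hpair⟩ := h _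
      (fun x y hxy => (copyEmbedding G lab a i).map_adj_iff.1 (hH hxy)) hdeg'
    exact ⟨.inl (i, .inl u), .inl (i, .inl v), hu, hv,
      hpair.copy (by rw [hu, hv]; decide)⟩

end LowerBound

def augmentCopy {α : Type*} {a : ℕ} (i : Fin a) : α ⊕ Fin 2 ↪ StepVertex α a :=
  (Function.Embedding.sectR i _).trans .inl

lemma augmentCopy_pairwiseDisjoint {α : Type*} [Fintype α] {a : ℕ} :
    ((Finset.univ : Finset (Fin a)) : Set (Fin a)).PairwiseDisjoint
      fun i => Finset.univ.map (augmentCopy (α := α) i) := by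
  intro i _ j _ hij
  refine Finset.disjoint_left.2 fun x hi hj => ?_
  obtain ⟨w, -, rfl⟩ := Finset.mem_map.1 hi
  obtain ⟨w', -, h⟩ := Finset.mem_map.1 hj
  simp only [augmentCopy, Function.Embedding.trans_apply, Function.Embedding.sectR_apply,
    Function.Embedding.inl_apply, Sum.inl.injEq, Prod.mk.injEq] at h
  exact hij h.1.symm

section CliqueWidth

variable {α : Type*} [Fintype α] [DecidableEq α] {G : SimpleGraph α} {lab : α → Fin 2}
  {a : ℕ}

def Fin.toSix : Fin 2 → Fin 6 := Fin.castLE (by norm_num)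

@[simp]
lemma Fin.val_toSix (c : Fin 2) : (c.toSix : ℕ) = c := rfl

lemma Fin.toSix_eq_iff {c : Fin 2} {m : Fin 6} : c.toSix = m ↔ (c : ℕ) = m := by
  rw [Fin.ext_iff, Fin.val_toSix]

theorem Constructible.augmentGraph (h : Constructible 6 Finset.univ G.Adj (Fin.toSix ∘ lab)) :
    Constructible 6 Finset.univ (augmentGraph G lab).Adj
      (Sum.elim (Fin.toSix ∘ lab) ![2, 3]) := by
  have h₀ := h.map Function.Embedding.inl (L' := Sum.elim (Fin.toSix ∘ lab) ![2, 3])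
    fun _ _ => rfl
  have h₁ := h₀.attach (v := .inr 0) (by simp) (i := 2) rfl
    (by simp [Fin.toSix_eq_iff]; omega) 1
  have h₂ := h₁.attach (v := .inr 1) (by simp) (i := 3) rfl
    (by simp [Fin.toSix_eq_iff]; omega) 0
  have huniv : insert (.inr 1) (insert (.inr 0) (Finset.univ.map .inl)) =
      (Finset.univ : Finset (α ⊕ Fin 2)) := by
    ext (x | c) <;> simp; omega
  rw [huniv] at h₂
  refine h₂.congr (fun x y _ _ => ?_) fun _ _ => rfl
  rcases x with x | c <;> rcases y with y | c' <;> (try fin_cases c) <;> (try fin_cases c') <;>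
    simp [_root_.augmentGraph, Relation.Map, Fin.toSix_eq_iff] <;> omega

theorem Constructible.stepGraph (h : Constructible 6 Finset.univ G.Adj (Fin.toSix ∘ lab))
    (ha : 0 < a) :
    Constructible 6 Finset.univ (stepGraph G lab a).Adj (Fin.toSix ∘ stepLabel lab a) := by
  set L : StepVertex α a → Fin 6 :=
    Sum.elim (fun p => Sum.elim (Fin.toSix ∘ lab) ![2, 3] p.2) ![4, 5]
  have hcopies := Constructible.biUnion (Finset.univ_nonempty_iff.2 ⟨⟨0, ha⟩⟩)
    augmentCopy_pairwiseDisjoint fun i _ => h.augmentGraph.map (augmentCopy i) (L' := L)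
      fun _ _ => rfl
  have h₁ := hcopies.attach (v := .inr 0) (by simp [augmentCopy]) (i := 4) rfl
    (by simp [augmentCopy, L, Fin.toSix_eq_iff]; omega) 2
  have h₂ := h₁.attach (v := .inr 1) (by simp [augmentCopy]) (i := 5) rfl
    (by simp [augmentCopy, L, Fin.toSix_eq_iff]; omega) 3
  have h₃ := (((h₂.relabel 2 0).relabel 3 1).relabel 4 0).relabel 5 1
  have huniv : insert (.inr 1) (insert (.inr 0)
      (Finset.univ.biUnion fun i => Finset.univ.map (augmentCopy i))) =
      (Finset.univ : Finset (StepVertex α a)) := by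
    ext (⟨i, x⟩ | c) <;> simp [augmentCopy]; omega
  rw [huniv] at h₃
  refine h₃.congr (fun x y _ _ => ?_) fun x _ => ?_
  · rcases x with ⟨i, x | c⟩ | c <;> rcases y with ⟨j, y | c'⟩ | c' <;>
      (try fin_cases c) <;> (try fin_cases c') <;>
      simp [_root_.stepGraph, _root_.augmentGraph, augmentCopy, Relation.Map, L,
        Fin.toSix_eq_iff, and_comm] <;> omega
  · rcases x with ⟨i, x | c⟩ | c <;>
      simp only [L, stepLabel, Sum.elim_inl, Sum.elim_inr, Function.comp_apply]
    · rcases Fin.exists_fin_two.1 ⟨lab x, rfl⟩ with h | h <;> simp only [h] <;> rfl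
    all_goals fin_cases c <;> rfl

end CliqueWidth

section LabelSwap

variable {α β : Type*}

def HasLabelSwap (lab : α → Fin 2) : Prop :=
  ∃ σ : Equiv.Perm α, ∀ x, lab (σ x) = (lab x).rev

lemma HasLabelSwap.two_mul_card_filter [Fintype α] {lab : α → Fin 2} (h : HasLabelSwap lab)
    (c : Fin 2) : 2 * (Finset.univ.filter (fun x => lab x = c)).card = Fintype.card α := by
  obtain ⟨σ, hσ⟩ := h
  have hswap : (Finset.univ.filter (fun x => lab x = c)).card =
      (Finset.univ.filter (fun x => lab x = c.rev)).card :=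
    Finset.card_nbij' σ σ.symm (fun x hx => by simp_all) (fun y hy => by
      have := hσ (σ.symm y)
      simp_all [Fin.rev_eq_iff]) (fun x _ => by simp) (fun y _ => by simp)
  have hcompl : Finset.univ.filter (fun x => ¬lab x = c) =
      Finset.univ.filter (fun x => lab x = c.rev) :=
    Finset.filter_congr fun x _ => by simp only [Fin.ext_iff, Fin.val_rev]; omega
  have := Finset.card_filter_add_card_filter_not (s := Finset.univ) (fun x => lab x = c)
  rw [hcompl, Finset.card_univ] at this
  omega

lemma HasLabelSwap.comp_equiv {lab : α → Fin 2} (h : HasLabelSwap lab) (e : α ≃ β) :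
    HasLabelSwap (lab ∘ e.symm) := by
  obtain ⟨σ, hσ⟩ := h
  exact ⟨e.permCongr σ, by simp [hσ]⟩

lemma HasLabelSwap.stepLabel {lab : α → Fin 2} (h : HasLabelSwap lab) (a : ℕ) :
    HasLabelSwap (stepLabel lab a) := by
  obtain ⟨σ, hσ⟩ := h
  refine ⟨.sumCongr (.prodCongr (.refl _) (.sumCongr σ Fin.revPerm)) Fin.revPerm, ?_⟩
  rintro (⟨i, x | c⟩ | c) <;> simp [_root_.stepLabel, hσ]

end LabelSwap

def HVert (a : ℕ) : ℕ → Type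
  | 0 => Fin 2
  | d + 1 => StepVertex (HVert a d) a

instance HVert.instDecidableEq (a : ℕ) : ∀ d, DecidableEq (HVert a d)
  | 0 => inferInstanceAs (DecidableEq (Fin 2))
  | d + 1 =>
    letI := HVert.instDecidableEq a d
    inferInstanceAs (DecidableEq (StepVertex (HVert a d) a))

instance HVert.instFintype (a : ℕ) : ∀ d, Fintype (HVert a d)
  | 0 => inferInstanceAs (Fintype (Fin 2))
  | d + 1 =>
    letI := HVert.instFintype a d
    inferInstanceAs (Fintype (StepVertex (HVert a d) a))

def hLabel (a : ℕ) : ∀ d, HVert a d → Fin 2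
  | 0 => id
  | d + 1 => stepLabel (hLabel a d) a

def hGraph (a : ℕ) : ∀ d, SimpleGraph (HVert a d)
  | 0 => (⊤ : SimpleGraph (Fin 2))
  | d + 1 => stepGraph (hGraph a d) (hLabel a d) a

section HGraph

variable {a : ℕ}

lemma card_hVert_add_six_le (ha : 2 ≤ a) (d : ℕ) :
    Fintype.card (HVert a d) + 6 ≤ 8 * a ^ d := by
  induction d with
  | zero => rfl
  | succ d ih =>
    rw [show Fintype.card (HVert a (d + 1)) = a * (Fintype.card (HVert a d) + 2) + 2 from
      Fintype.card_stepVertex a, pow_succ]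
    nlinarith

lemma hasLabelSwap_hLabel (a d : ℕ) : HasLabelSwap (hLabel a d) := by
  induction d with
  | zero => exact ⟨Fin.revPerm, fun _ => rfl⟩
  | succ d ih => exact ih.stepLabel a

lemma cliqueWidthLE_hGraph (ha : 0 < a) (d : ℕ) : CliqueWidthLE (hGraph a d) 6 := by
  suffices Constructible 6 Finset.univ (hGraph a d).Adj (Fin.toSix ∘ hLabel a d) from
    ⟨_, _, this, fun _ _ => Iff.rfl⟩
  induction d with
  | zero =>
    have h := (Constructible.single 0 Fin.toSix).attach (v := 1) (by simp) (i := 1) rfl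
      (by decide) 0
    rw [show ({1, 0} : Finset (Fin 2)) = Finset.univ by decide] at h
    refine h.congr (fun x y _ _ => ?_) fun _ _ => rfl
    fin_cases x <;> fin_cases y <;> simp [hGraph, Fin.toSix_eq_iff]
  | succ d ih => exact ih.stepGraph ha

lemma forcesOutdegree_hGraph {d : ℕ} (hd : 2 * d ≤ a + 1) :
    ForcesOutdegree (hGraph a d) (hLabel a d) d := by
  induction d with
  | zero => exact forcesOutdegree_zero (α := Fin 2) _ _
  | succ d ih => exact (ih (by omega)).step (by omega)

end HGraph

/-- For every `d ≥ 0` and `a ≥ max(2, 2d − 1)` there is a graph `H_{d,a}` with a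
2-coloring of its vertices (each color used on half the vertices), at most `8a^d − 6`
vertices, clique-width at most `6`, such that for every partial orientation of maximum
outdegree less than `d` there are vertices `u` of the first color and `v` of the second
color at distance exactly two such that no common neighbor `x` of `u` and `v` has
`(u,x)` or `(v,x)` as a directed edge (hence no weak 2-guidance system of `H_{d,a}` has
maximum outdegree less than `d`). -/
theorem cliqueWidth_six_lower_bound (d a : ℕ) (ha : max 2 (2 * d - 1) ≤ a) :
    ∃ (n : ℕ) (G : SimpleGraph (Fin n)) (lab : Fin n → Fin 2),
      n ≤ 8 * a ^ d - 6 ∧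
      2 * (Finset.univ.filter (fun v => lab v = 0)).card = n ∧
      2 * (Finset.univ.filter (fun v => lab v = 1)).card = n ∧
      CliqueWidthLE G 6 ∧
      ∀ H : Fin n → Fin n → Prop, IsPartialOrientation G H →
        (∀ u, outdeg H u < d) →
        ∃ u v : Fin n, lab u = 0 ∧ lab v = 1 ∧ G.dist u v = 2 ∧
          ∀ x, G.Adj u x → G.Adj v x → ¬H u x ∧ ¬H v x := by
  have ha₂ : 2 ≤ a := le_of_max_le_left ha
  have hda : 2 * d ≤ a + 1 := by have := le_of_max_le_right ha; omega
  let e := Fintype.equivFin (HVert a d)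
  let φ := Iso.map e (hGraph a d)
  have hswap := (hasLabelSwap_hLabel a d).comp_equiv e
  refine ⟨_, (hGraph a d).map e, hLabel a d ∘ e.symm, ?_, ?_, ?_,
    (cliqueWidthLE_hGraph (by omega) d).iso φ, (forcesOutdegree_hGraph hda).iso φ⟩
  · have := card_hVert_add_six_le ha₂ d
    omega
  · simpa using hswap.two_mul_card_filter 0
  · simpa using hswap.two_mul_card_filter 1
end

section
/- Let K be any tournament on vertex set {1,…,n}, and let G be the graph with vertices v₁,…,vₙ,u₁,…,uₙ,z where each uᵢ is adjacent to z, to vᵢ, and to every v_j with (i,j) an arc of K. Let H be the partial orientation containing exactly the edges (vᵢ,uᵢ) and (uᵢ,z) for each i. Then H is a weak 2-guidance system for G of maximum outdegree one, and every 2-independent set in G has size at most 2. -/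
open SimpleGraph

variable {V : Type*}

/-- A `2`-independent set: distinct vertices at distance greater than `2`. -/
def IsDistIndependent2 (G : SimpleGraph V) (S : Set V) : Prop :=
  ∀ u ∈ S, ∀ v ∈ S, u ≠ v → ¬(G.Reachable u v ∧ G.dist u v ≤ 2)

/-- Let `K` be a tournament on `{1,…,n}` and `G` the graph on vertices
`v₁,…,vₙ` (left summand), `u₁,…,uₙ` (middle), `z` (right), where `uᵢ` is adjacent to `z`,
to `vᵢ` and to every `v_j` with `(i,j)` an arc of `K`.  The partial orientation `H`
consisting exactly of the edges `(vᵢ, uᵢ)` and `(uᵢ, z)` is a weak `2`-guidance system of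
maximum outdegree one, and every `2`-independent set of `G` has size at most `2`. -/
theorem tournament_gadget (n : ℕ) (K : Fin n → Fin n → Prop)
    (hKirr : ∀ i, ¬K i i)
    (hKtot : ∀ i j, i ≠ j → (K i j ↔ ¬K j i))
    (G : SimpleGraph (Fin n ⊕ Fin n ⊕ Unit))
    (hG : ∀ a b, G.Adj a b ↔
      ((∃ i, (a = Sum.inr (Sum.inl i) ∧ b = Sum.inr (Sum.inr ())) ∨
             (a = Sum.inr (Sum.inr ()) ∧ b = Sum.inr (Sum.inl i))) ∨
       (∃ i, (a = Sum.inl i ∧ b = Sum.inr (Sum.inl i)) ∨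
             (a = Sum.inr (Sum.inl i) ∧ b = Sum.inl i)) ∨
       (∃ i j, K i j ∧ ((a = Sum.inr (Sum.inl i) ∧ b = Sum.inl j) ∨
             (a = Sum.inl j ∧ b = Sum.inr (Sum.inl i))))))
    (H : Fin n ⊕ Fin n ⊕ Unit → Fin n ⊕ Fin n ⊕ Unit → Prop)
    (hH : ∀ x y, H x y ↔
      ((∃ i, x = Sum.inl i ∧ y = Sum.inr (Sum.inl i)) ∨
       (∃ i, x = Sum.inr (Sum.inl i) ∧ y = Sum.inr (Sum.inr ())))) :
    IsPartialOrientation G H ∧ IsWeakGuidanceGate G H 2 ∧ (∀ x, outdeg H x ≤ 1) ∧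
      ∀ S : Set (Fin n ⊕ Fin n ⊕ Unit), IsDistIndependent2 G S → S.ncard ≤ 2 := by
  -- basic adjacency facts
  have adjUZ : ∀ i : Fin n, G.Adj (Sum.inr (Sum.inl i)) (Sum.inr (Sum.inr ())) := fun i =>
    (hG _ _).2 (Or.inl ⟨i, Or.inl ⟨rfl, rfl⟩⟩)
  have adjVU : ∀ i : Fin n, G.Adj (Sum.inl i) (Sum.inr (Sum.inl i)) := fun i =>
    (hG _ _).2 (Or.inr (Or.inl ⟨i, Or.inl ⟨rfl, rfl⟩⟩))
  have adjK : ∀ i j : Fin n, K i j → G.Adj (Sum.inr (Sum.inl i)) (Sum.inl j) := fun i j h =>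
    (hG _ _).2 (Or.inr (Or.inr ⟨i, j, h, Or.inl ⟨rfl, rfl⟩⟩))
  have hHVU : ∀ i : Fin n, H (Sum.inl i) (Sum.inr (Sum.inl i)) := fun i =>
    (hH _ _).2 (Or.inl ⟨i, rfl, rfl⟩)
  have hHUZ : ∀ i : Fin n, H (Sum.inr (Sum.inl i)) (Sum.inr (Sum.inr ())) := fun i =>
    (hH _ _).2 (Or.inr ⟨i, rfl, rfl⟩)
  refine ⟨?_, ?_, ?_, ?_⟩
  · -- partial orientation
    intro x y hxy
    rcases (hH x y).1 hxy with ⟨i, rfl, rfl⟩ | ⟨i, rfl, rfl⟩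
    · exact adjVU i
    · exact adjUZ i
  · -- gate guidance
    intro u v h2 hr
    have hd : G.dist u v = 2 := le_antisymm hr h2
    have hreach : G.Reachable u v := Reachable.of_dist_ne_zero (by omega)
    obtain ⟨p, hp⟩ := hreach.exists_walk_length_eq_dist
    rw [hd] at hp
    -- extract a common neighbor w
    obtain ⟨w, huw, hwv⟩ : ∃ w, G.Adj u w ∧ G.Adj w v := by
      cases p with
      | nil => simp at hp
      | cons h q =>
        cases q with
        | nil => simp at hp
        | cons h' q' =>
          cases q' with
          | nil => exact ⟨_, h, h'⟩
          | cons h'' q'' => simp [Nat.succ_eq_add_one] at hp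
    have gmem : ∀ y, G.Adj u y → G.Adj y v → y ∈ gate G u v := by
      intro y h1 h2'
      exact ⟨h1, by rw [hd]; exact (G.dist_eq_one_iff_adj).2 h2'⟩
    have gmem' : ∀ y, G.Adj v y → G.Adj y u → y ∈ gate G v u := by
      intro y h1 h2'
      have hvu : G.dist v u = 2 := by rw [SimpleGraph.dist_comm]; exact hd
      exact ⟨h1, by rw [hvu]; exact (G.dist_eq_one_iff_adj).2 h2'⟩
    rcases u with i | i | _ <;> rcases v with j | j | _
    · -- vᵢ, v_j
      have hij : i ≠ j := by rintro rfl; simp [G.dist_self] at hd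
      by_cases hk : K i j
      · exact Or.inl ⟨Sum.inr (Sum.inl i), gmem _ (adjVU i) (adjK i j hk), hHVU i⟩
      · have hk' : K j i := (hKtot j i hij.symm).2 hk
        exact Or.inr ⟨Sum.inr (Sum.inl j), gmem' _ (adjVU j) (adjK j i hk'), hHVU j⟩
    · -- vᵢ, u_j : impossible at distance 2
      exfalso
      rcases w with k | k | _
      · simp [hG] at huw
      · simp [hG] at hwv
      · simp [hG] at huw
    · -- vᵢ, z
      exact Or.inl ⟨Sum.inr (Sum.inl i), gmem _ (adjVU i) (adjUZ i), hHVU i⟩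
    · -- uᵢ, v_j : impossible
      exfalso
      rcases w with k | k | _
      · simp [hG] at hwv
      · simp [hG] at huw
      · simp [hG] at hwv
    · -- uᵢ, u_j
      exact Or.inl ⟨Sum.inr (Sum.inr ()), gmem _ (adjUZ i) (adjUZ j).symm, hHUZ i⟩
    · -- uᵢ, z : adjacent, contradiction
      have h1 := (G.dist_eq_one_iff_adj).2 (adjUZ i)
      rw [h1] at hd; exact absurd hd (by omega)
    · -- z, v_j
      exact Or.inr ⟨Sum.inr (Sum.inl j), gmem' _ (adjVU j) (adjUZ j), hHVU j⟩
    · -- z, u_j : adjacent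
      have h1 := (G.dist_eq_one_iff_adj).2 (adjUZ j).symm
      rw [h1] at hd; exact absurd hd (by omega)
    · -- z, z
      simp [G.dist_self] at hd
  · -- outdegree ≤ 1
    intro x
    rcases x with i | i | _
    · have : {y | H (Sum.inl i) y} = {Sum.inr (Sum.inl i)} := by
        ext y; simp [hH]
      rw [outdeg, this, Set.ncard_singleton]
    · have : {y | H (Sum.inr (Sum.inl i)) y} = {Sum.inr (Sum.inr ())} := by
        ext y; simp [hH]
      rw [outdeg, this, Set.ncard_singleton]
    · have : {y | H (Sum.inr (Sum.inr ())) y} = ∅ := by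
        ext y; simp [hH]
      simp [outdeg, this]
  · -- 2-independent sets
    intro S hS
    -- distance facts
    have dVV : ∀ i j : Fin n, i ≠ j →
        G.Reachable (Sum.inl i) (Sum.inl j) ∧ G.dist (Sum.inl i) (Sum.inl j) ≤ 2 := by
      intro i j hij
      by_cases hk : K i j
      · have hl := G.dist_le (Walk.cons (adjVU i) (Walk.cons (adjK i j hk) Walk.nil))
        simp only [Walk.length_cons, Walk.length_nil] at hl
        exact ⟨⟨Walk.cons (adjVU i) (Walk.cons (adjK i j hk) Walk.nil)⟩, hl⟩
      · have hk' : K j i := (hKtot j i hij.symm).2 hk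
        have hl := G.dist_le (Walk.cons (adjK j i hk').symm (Walk.cons (adjVU j).symm Walk.nil))
        simp only [Walk.length_cons, Walk.length_nil] at hl
        exact ⟨⟨Walk.cons (adjK j i hk').symm (Walk.cons (adjVU j).symm Walk.nil)⟩, hl⟩
    have dUU : ∀ i j : Fin n,
        G.Reachable (Sum.inr (Sum.inl i)) (Sum.inr (Sum.inl j)) ∧
          G.dist (Sum.inr (Sum.inl i)) (Sum.inr (Sum.inl j)) ≤ 2 := by
      intro i j
      have hl := G.dist_le (Walk.cons (adjUZ i) (Walk.cons (adjUZ j).symm Walk.nil))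
      simp only [Walk.length_cons, Walk.length_nil] at hl
      exact ⟨⟨Walk.cons (adjUZ i) (Walk.cons (adjUZ j).symm Walk.nil)⟩, hl⟩
    have dUZ : ∀ i : Fin n,
        G.Reachable (Sum.inr (Sum.inl i)) (Sum.inr (Sum.inr ())) ∧
          G.dist (Sum.inr (Sum.inl i)) (Sum.inr (Sum.inr ())) ≤ 2 := by
      intro i
      have hl := G.dist_le (Walk.cons (adjUZ i) Walk.nil)
      simp only [Walk.length_cons, Walk.length_nil] at hl
      exact ⟨⟨Walk.cons (adjUZ i) Walk.nil⟩, le_trans hl (by omega)⟩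
    -- split S
    have hsplit : S = (S ∩ Set.range Sum.inl) ∪ (S ∩ Set.range Sum.inr) := by
      ext x; rcases x with i | w <;> simp
    have hA : (S ∩ Set.range Sum.inl).ncard ≤ 1 := by
      rw [Set.ncard_le_one (Set.toFinite _)]
      rintro a ⟨ha, i, rfl⟩ b ⟨hb, j, rfl⟩
      by_contra hne
      have hij : i ≠ j := fun h => hne (by rw [h])
      exact hS _ ha _ hb hne (dVV i j hij)
    have hB : (S ∩ Set.range Sum.inr).ncard ≤ 1 := by
      rw [Set.ncard_le_one (Set.toFinite _)]
      rintro a ⟨ha, w, rfl⟩ b ⟨hb, w', rfl⟩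
      by_contra hne
      rcases w with i | _ <;> rcases w' with j | _
      · exact hS _ ha _ hb hne (dUU i j)
      · exact hS _ ha _ hb hne (dUZ i)
      · refine hS _ ha _ hb hne ⟨(dUZ j).1.symm, ?_⟩
        rw [G.dist_comm]; exact (dUZ j).2
      · exact hne rfl
    calc S.ncard = ((S ∩ Set.range Sum.inl) ∪ (S ∩ Set.range Sum.inr)).ncard := by
          rw [← hsplit]
      _ ≤ (S ∩ Set.range Sum.inl).ncard + (S ∩ Set.range Sum.inr).ncard :=
          Set.ncard_union_le _ _
      _ ≤ 2 := by omega
end
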